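/- arXiv:math/0603481 — 4 statements merged into one kernel-verified Lean document; each statement's English description precedes it below -/
import Mathlib

section
/- For all n ≥ 3, the set of partitions of [n] avoiding both the patterns 1/2/3 and 12/3 is exactly {12...n, 1/23...n, 13...n/2}, and hence has exactly 3 elements. -/
open Finset

structure SetPartition (n : ℕ) where
  blocks : Finset (Finset ℕ)
  nonempty_mem : ∀ B ∈ blocks, B.Nonempty
  disj : ∀ B ∈ blocks, ∀ C ∈ blocks, B ≠ C → Disjoint B C
  cover : blocks.sup id = Finset.Icc 1 n

/-- `σ` contains the pattern `π`: there is an order-preserving choice of elements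
and an injective assignment of blocks of `π` to distinct blocks of `σ`. -/
def SetPartition.Contains {n k : ℕ} (σ : SetPartition n) (π : SetPartition k) : Prop :=
  ∃ f : ℕ → ℕ, StrictMonoOn f (Finset.Icc 1 k : Set ℕ) ∧
    ∃ g : Finset ℕ → Finset ℕ,
      (∀ B ∈ π.blocks, g B ∈ σ.blocks) ∧
      (∀ B ∈ π.blocks, ∀ C ∈ π.blocks, g B = g C → B = C) ∧
      (∀ B ∈ π.blocks, ∀ x ∈ B, f x ∈ g B)

def SetPartition.Avoids {n k : ℕ} (σ : SetPartition n) (π : SetPartition k) : Prop :=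
  ¬ σ.Contains π

def pat1_2_3 : SetPartition 3 := ⟨{{1}, {2}, {3}}, by decide, by decide, by decide⟩
def pat1_23 : SetPartition 3 := ⟨{{1}, {2, 3}}, by decide, by decide, by decide⟩
def pat12_3 : SetPartition 3 := ⟨{{1, 2}, {3}}, by decide, by decide, by decide⟩
def pat13_2 : SetPartition 3 := ⟨{{1, 3}, {2}}, by decide, by decide, by decide⟩
def pat123 : SetPartition 3 := ⟨{{1, 2, 3}}, by decide, by decide, by decide⟩


theorem SetPartition.ext' {n : ℕ} {σ τ : SetPartition n} (h : σ.blocks = τ.blocks) :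
    σ = τ := by
  cases σ; cases τ; simp_all

lemma contains123_of {n : ℕ} (σ : SetPartition n) {B1 B2 B3 : Finset ℕ}
    (h1 : B1 ∈ σ.blocks) (h2 : B2 ∈ σ.blocks) (h3 : B3 ∈ σ.blocks)
    (h12 : B1 ≠ B2) (h13 : B1 ≠ B3) (h23 : B2 ≠ B3)
    {a b c : ℕ} (ha : a ∈ B1) (hb : b ∈ B2) (hc : c ∈ B3)
    (hab : a < b) (hbc : b < c) : σ.Contains pat1_2_3 := by
  refine ⟨fun t => if t ≤ 1 then a else if t = 2 then b else c, ?_,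
    fun S => if S = {1} then B1 else if S = {2} then B2 else B3, ?_, ?_, ?_⟩
  · intro x hx y hy hxy
    simp only [Finset.coe_Icc, Set.mem_Icc] at hx hy
    obtain ⟨hx1, hx3⟩ := hx
    obtain ⟨hy1, hy3⟩ := hy
    interval_cases x <;> interval_cases y <;> simp_all <;> omega
  · intro B hB
    have : B = {1} ∨ B = {2} ∨ B = {3} := by
      simpa [pat1_2_3] using hB
    rcases this with rfl | rfl | rfl <;> simp [h1, h2, h3]
  · intro B hB C hC hgBC
    have hB' : B = {1} ∨ B = {2} ∨ B = {3} := by simpa [pat1_2_3] using hB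
    have hC' : C = {1} ∨ C = {2} ∨ C = {3} := by simpa [pat1_2_3] using hC
    rcases hB' with rfl | rfl | rfl <;> rcases hC' with rfl | rfl | rfl <;>
      simp_all <;> first
        | rfl
        | (exfalso; revert hgBC; rw [if_neg (by decide), if_neg (by decide)]; intro h; simp_all)
  · intro B hB x hx
    have hB' : B = {1} ∨ B = {2} ∨ B = {3} := by simpa [pat1_2_3] using hB
    rcases hB' with rfl | rfl | rfl <;> simp_all

lemma contains12_3_of {n : ℕ} (σ : SetPartition n) {B C : Finset ℕ}
    (hB : B ∈ σ.blocks) (hC : C ∈ σ.blocks) (hBC : B ≠ C)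
    {a b c : ℕ} (ha : a ∈ B) (hb : b ∈ B) (hc : c ∈ C)
    (hab : a < b) (hbc : b < c) : σ.Contains pat12_3 := by
  refine ⟨fun t => if t ≤ 1 then a else if t = 2 then b else c, ?_,
    fun S => if S = {3} then C else B, ?_, ?_, ?_⟩
  · intro x hx y hy hxy
    simp only [Finset.coe_Icc, Set.mem_Icc] at hx hy
    obtain ⟨hx1, hx3⟩ := hx
    obtain ⟨hy1, hy3⟩ := hy
    interval_cases x <;> interval_cases y <;> simp_all <;> omega
  · intro S hS
    have : S = {1, 2} ∨ S = {3} := by simpa [pat12_3] using hS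
    rcases this with rfl | rfl
    · beta_reduce
      rw [if_neg (show ¬ ({1,2} : Finset ℕ) = {3} by decide)]; exact hB
    · simp [hC]
  · intro S hS T hT hgST
    have hS' : S = {1, 2} ∨ S = {3} := by simpa [pat12_3] using hS
    have hT' : T = {1, 2} ∨ T = {3} := by simpa [pat12_3] using hT
    rcases hS' with rfl | rfl <;> rcases hT' with rfl | rfl <;>
        simp only [if_neg (show ¬ ({1,2} : Finset ℕ) = {3} by decide), if_pos rfl] at hgST <;>
        simp_all
  · intro S hS x hx
    have hS' : S = {1, 2} ∨ S = {3} := by simpa [pat12_3] using hS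
    rcases hS' with rfl | rfl
    · beta_reduce
      rw [if_neg (show ¬ ({1,2} : Finset ℕ) = {3} by decide)]
      simp only [Finset.mem_insert, Finset.mem_singleton] at hx
      rcases hx with rfl | rfl
      · simpa using ha
      · simpa using hb
    · simp only [Finset.mem_singleton] at hx
      subst hx
      simpa using hc

lemma twoblock {n : ℕ} (hn : 3 ≤ n) (σ : SetPartition n) (h2 : σ.Avoids pat12_3)
    {B C : Finset ℕ} (hblocks : σ.blocks = {B, C}) (hBC : B ≠ C) (hnB : n ∈ B) :
    σ.blocks = {{1}, Finset.Icc 2 n} ∨ σ.blocks = {insert 1 (Finset.Icc 3 n), {2}} := by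
  have hB : B ∈ σ.blocks := by rw [hblocks]; simp
  have hC : C ∈ σ.blocks := by rw [hblocks]; simp
  have hdisj : Disjoint B C := σ.disj B hB C hC hBC
  have hcover : B ∪ C = Finset.Icc 1 n := by
    have := σ.cover
    rw [hblocks, Finset.sup_insert, Finset.sup_singleton] at this
    simpa [Finset.sup_eq_union] using this
  have hmem : ∀ k, 1 ≤ k → k ≤ n → k ∈ B ∨ k ∈ C := by
    intro k h1 h2
    have : k ∈ B ∪ C := by rw [hcover]; simp [h1, h2]
    simpa using this
  have hsubB : ∀ k ∈ B, k ≤ n := by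
    intro k hk
    have : k ∈ Finset.Icc 1 n := by rw [← hcover]; simp [hk]
    simp at this; omega
  have hsubC : ∀ k ∈ C, k ≤ n := by
    intro k hk
    have : k ∈ Finset.Icc 1 n := by rw [← hcover]; simp [hk]
    simp at this; omega
  obtain ⟨x, hx⟩ := σ.nonempty_mem C hC
  -- C is a singleton
  have hCx : C = {x} := by
    rw [Finset.eq_singleton_iff_unique_mem]
    refine ⟨hx, fun y hy => ?_⟩
    by_contra hne
    have hyn : y ≠ n := fun h => Finset.disjoint_left.mp hdisj hnB (h ▸ hy)
    have hxn : x ≠ n := fun h => Finset.disjoint_left.mp hdisj hnB (h ▸ hx)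
    have hy_le := hsubC y hy
    have hx_le := hsubC x hx
    rcases lt_or_gt_of_ne (fun h => hne h.symm) with h | h
    · exact h2 (contains12_3_of σ hC hB hBC.symm hx hy hnB h (by omega))
    · exact h2 (contains12_3_of σ hC hB hBC.symm hy hx hnB h (by omega))
  subst hCx
  -- x ≤ 2
  have hx2 : x = 1 ∨ x = 2 := by
    by_contra hge
    push_neg at hge
    have hx1 : 1 ∈ B := by
      rcases hmem 1 le_rfl (by omega) with h | h
      · exact h
      · simp at h; omega
    have hx2' : 2 ∈ B := by
      rcases hmem 2 (by omega) (by omega) with h | h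
      · exact h
      · simp at h; omega
    have hx3 : 3 ≤ x := by
      have := σ.nonempty_mem {x} hC
      have hx0 : 1 ≤ x := by
        have : x ∈ Finset.Icc 1 n := by rw [← hcover]; simp
        simp at this; omega
      omega
    exact h2 (contains12_3_of σ hB hC hBC hx1 hx2' (Finset.mem_singleton_self x)
      one_lt_two (by omega))
  rcases hx2 with rfl | rfl
  · left
    have hBeq : B = Finset.Icc 2 n := by
      ext k
      simp only [Finset.mem_Icc]
      constructor
      · intro hk
        have h1 : k ≠ 1 := fun h => Finset.disjoint_left.mp hdisj hk (by simp [h])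
        have h2 : k ≤ n := hsubB k hk
        have h3 : 1 ≤ k := by
          have : k ∈ Finset.Icc 1 n := by rw [← hcover]; simp [hk]
          simp at this; omega
        omega
      · intro hk
        rcases hmem k (by omega) hk.2 with h | h
        · exact h
        · simp at h; omega
    rw [hblocks, hBeq, Finset.pair_comm]
  · right
    have hBeq : B = insert 1 (Finset.Icc 3 n) := by
      ext k
      simp only [Finset.mem_insert, Finset.mem_Icc]
      constructor
      · intro hk
        have h1 : k ≠ 2 := fun h => Finset.disjoint_left.mp hdisj hk (by simp [h])
        have h2 : k ≤ n := hsubB k hk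
        have h3 : 1 ≤ k := by
          have : k ∈ Finset.Icc 1 n := by rw [← hcover]; simp [hk]
          simp at this; omega
        omega
      · intro hk
        have h1 : 1 ≤ k := by omega
        have h2 : k ≤ n := by omega
        rcases hmem k h1 h2 with h | h
        · exact h
        · simp at h; omega
    rw [hblocks, hBeq]

lemma card_le_two {n : ℕ} (σ : SetPartition n) (h1 : σ.Avoids pat1_2_3) :
    σ.blocks.card ≤ 2 := by
  by_contra h
  push_neg at h
  obtain ⟨s, hs, hcard⟩ := Finset.exists_subset_card_eq (show 3 ≤ σ.blocks.card by omega)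
  obtain ⟨B1, B2, B3, h12, h13, h23, rfl⟩ := Finset.card_eq_three.mp hcard
  have hB1 : B1 ∈ σ.blocks := hs (by simp)
  have hB2 : B2 ∈ σ.blocks := hs (by simp)
  have hB3 : B3 ∈ σ.blocks := hs (by simp)
  obtain ⟨a, ha⟩ := σ.nonempty_mem B1 hB1
  obtain ⟨b, hb⟩ := σ.nonempty_mem B2 hB2
  obtain ⟨c, hc⟩ := σ.nonempty_mem B3 hB3
  have hab : a ≠ b := fun h => Finset.disjoint_left.mp (σ.disj B1 hB1 B2 hB2 h12) ha (h ▸ hb)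
  have hac : a ≠ c := fun h => Finset.disjoint_left.mp (σ.disj B1 hB1 B3 hB3 h13) ha (h ▸ hc)
  have hbc : b ≠ c := fun h => Finset.disjoint_left.mp (σ.disj B2 hB2 B3 hB3 h23) hb (h ▸ hc)
  apply h1
  rcases lt_or_gt_of_ne hab with h1' | h1' <;> rcases lt_or_gt_of_ne hac with h2' | h2' <;>
    rcases lt_or_gt_of_ne hbc with h3' | h3'
  · exact contains123_of σ hB1 hB2 hB3 h12 h13 h23 ha hb hc h1' h3'
  · exact contains123_of σ hB1 hB3 hB2 h13 h12 h23.symm ha hc hb h2' h3'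
  · omega
  · exact contains123_of σ hB3 hB1 hB2 h13.symm h23.symm h12 hc ha hb h2' h1'
  · exact contains123_of σ hB2 hB1 hB3 h12.symm h23 h13 hb ha hc h1' h2'
  · omega
  · exact contains123_of σ hB2 hB3 hB1 h23 h12.symm h13.symm hb hc ha h3' h2'
  · exact contains123_of σ hB3 hB2 hB1 h23.symm h13.symm h12.symm hc hb ha h3' h1'

lemma forward {n : ℕ} (hn : 3 ≤ n) (σ : SetPartition n)
    (h1 : σ.Avoids pat1_2_3) (h2 : σ.Avoids pat12_3) :
    σ.blocks = {Finset.Icc 1 n} ∨ σ.blocks = {{1}, Finset.Icc 2 n} ∨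
    σ.blocks = {insert 1 (Finset.Icc 3 n), {2}} := by
  have hcard := card_le_two σ h1
  interval_cases h : σ.blocks.card
  · exfalso
    have hb : σ.blocks = ∅ := Finset.card_eq_zero.mp h
    have := σ.cover
    rw [hb] at this
    simp at this
    have : (1 : ℕ) ∈ Finset.Icc 1 n := by simp; omega
    rw [← σ.cover, hb] at this
    simp at this
  · left
    obtain ⟨B, hB⟩ := Finset.card_eq_one.mp h
    have := σ.cover
    rw [hB, Finset.sup_singleton] at this
    have hBeq : B = Finset.Icc 1 n := by simpa using this
    rw [hB, hBeq]
  · obtain ⟨B, C, hBC, hblocks⟩ := Finset.card_eq_two.mp h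
    have hcover : B ∪ C = Finset.Icc 1 n := by
      have := σ.cover
      rw [hblocks, Finset.sup_insert, Finset.sup_singleton] at this
      simpa [Finset.sup_eq_union] using this
    have hnBC : n ∈ B ∪ C := by rw [hcover]; simp; omega
    simp only [Finset.mem_union] at hnBC
    rcases hnBC with hnB | hnC
    · exact Or.inr (twoblock hn σ h2 hblocks hBC hnB)
    · refine Or.inr (twoblock hn σ h2 ?_ hBC.symm hnC)
      rw [hblocks, Finset.pair_comm]

lemma avoids123_of_card_le_two {n : ℕ} (σ : SetPartition n) (h : σ.blocks.card ≤ 2) :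
    σ.Avoids pat1_2_3 := by
  rintro ⟨f, hf, g, hg1, hg2, hg3⟩
  have m1 : ({1} : Finset ℕ) ∈ pat1_2_3.blocks := by simp [pat1_2_3]
  have m2 : ({2} : Finset ℕ) ∈ pat1_2_3.blocks := by simp [pat1_2_3]
  have m3 : ({3} : Finset ℕ) ∈ pat1_2_3.blocks := by simp [pat1_2_3]
  have hne12 : g {1} ≠ g {2} := fun h' => by have := hg2 _ m1 _ m2 h'; simp at this
  have hne13 : g {1} ≠ g {3} := fun h' => by have := hg2 _ m1 _ m3 h'; simp at this
  have hne23 : g {2} ≠ g {3} := fun h' => by have := hg2 _ m2 _ m3 h'; simp at this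
  have hsub : ({g {1}, g {2}, g {3}} : Finset (Finset ℕ)) ⊆ σ.blocks := by
    intro X hX
    simp only [Finset.mem_insert, Finset.mem_singleton] at hX
    rcases hX with rfl | rfl | rfl
    · exact hg1 _ m1
    · exact hg1 _ m2
    · exact hg1 _ m3
  have hc : ({g {1}, g {2}, g {3}} : Finset (Finset ℕ)).card = 3 :=
    Finset.card_eq_three.mpr ⟨_, _, _, hne12, hne13, hne23, rfl⟩
  have := Finset.card_le_card hsub
  omega

lemma f_lt {f : ℕ → ℕ} (hf : StrictMonoOn f (Finset.Icc 1 3 : Set ℕ)) :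
    f 1 < f 2 ∧ f 2 < f 3 := by
  constructor
  · exact hf (by simp) (by simp) (by omega)
  · exact hf (by simp) (by simp) (by omega)

lemma mem12_3 : (({1, 2} : Finset ℕ) ∈ pat12_3.blocks) ∧ (({3} : Finset ℕ) ∈ pat12_3.blocks) := by
  constructor <;> simp [pat12_3]

lemma avoid12_3_single {n : ℕ} (σ : SetPartition n) (h : σ.blocks = {Finset.Icc 1 n}) :
    σ.Avoids pat12_3 := by
  rintro ⟨f, hf, g, hg1, hg2, hg3⟩
  have hP := hg1 _ mem12_3.1
  have hQ := hg1 _ mem12_3.2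
  rw [h] at hP hQ
  simp only [Finset.mem_singleton] at hP hQ
  have := hg2 _ mem12_3.1 _ mem12_3.2 (hP.trans hQ.symm)
  exact absurd this (by decide)

lemma avoid12_3_two {n : ℕ} (σ : SetPartition n)
    (h : σ.blocks = {{1}, Finset.Icc 2 n}) : σ.Avoids pat12_3 := by
  rintro ⟨f, hf, g, hg1, hg2, hg3⟩
  obtain ⟨h12, h23⟩ := f_lt hf
  have e1 : f 1 ∈ g {1, 2} := hg3 _ mem12_3.1 1 (by simp)
  have e2 : f 2 ∈ g {1, 2} := hg3 _ mem12_3.1 2 (by simp)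
  have e3 : f 3 ∈ g {3} := hg3 _ mem12_3.2 3 (by simp)
  have hP := hg1 _ mem12_3.1
  have hQ := hg1 _ mem12_3.2
  rw [h] at hP hQ
  have hPQ : g {1, 2} ≠ g {3} := fun h' => by
    have := hg2 _ mem12_3.1 _ mem12_3.2 h'; exact absurd this (by decide)
  simp only [Finset.mem_insert, Finset.mem_singleton] at hP hQ
  rcases hP with hP | hP
  · rw [hP] at e1 e2
    simp only [Finset.mem_singleton] at e1 e2
    omega
  · rcases hQ with hQ | hQ
    · rw [hQ] at e3
      rw [hP] at e2
      simp only [Finset.mem_singleton] at e3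
      simp only [Finset.mem_Icc] at e2
      omega
    · exact hPQ (hP.trans hQ.symm)

lemma avoid12_3_three {n : ℕ} (σ : SetPartition n)
    (h : σ.blocks = {insert 1 (Finset.Icc 3 n), {2}}) : σ.Avoids pat12_3 := by
  rintro ⟨f, hf, g, hg1, hg2, hg3⟩
  obtain ⟨h12, h23⟩ := f_lt hf
  have e1 : f 1 ∈ g {1, 2} := hg3 _ mem12_3.1 1 (by simp)
  have e2 : f 2 ∈ g {1, 2} := hg3 _ mem12_3.1 2 (by simp)
  have e3 : f 3 ∈ g {3} := hg3 _ mem12_3.2 3 (by simp)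
  have hP := hg1 _ mem12_3.1
  have hQ := hg1 _ mem12_3.2
  rw [h] at hP hQ
  have hPQ : g {1, 2} ≠ g {3} := fun h' => by
    have := hg2 _ mem12_3.1 _ mem12_3.2 h'; exact absurd this (by decide)
  simp only [Finset.mem_insert, Finset.mem_singleton] at hP hQ
  rcases hP with hP | hP
  · rcases hQ with hQ | hQ
    · exact hPQ (hP.trans hQ.symm)
    · rw [hQ] at e3
      rw [hP] at e1 e2
      simp only [Finset.mem_singleton] at e3
      simp only [Finset.mem_insert, Finset.mem_Icc] at e1 e2
      omega
  · rw [hP] at e1 e2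
    simp only [Finset.mem_singleton] at e1 e2
    omega

theorem stmt0 (n : ℕ) (hn : 3 ≤ n) :
    ({σ : SetPartition n | σ.Avoids pat1_2_3 ∧ σ.Avoids pat12_3} =
      {σ : SetPartition n |
        σ.blocks = {Finset.Icc 1 n} ∨
        σ.blocks = {{1}, Finset.Icc 2 n} ∨
        σ.blocks = {insert 1 (Finset.Icc 3 n), {2}}}) ∧
    ({σ : SetPartition n | σ.Avoids pat1_2_3 ∧ σ.Avoids pat12_3}).ncard = 3 := by
  have hset : {σ : SetPartition n | σ.Avoids pat1_2_3 ∧ σ.Avoids pat12_3} =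
      {σ : SetPartition n |
        σ.blocks = {Finset.Icc 1 n} ∨
        σ.blocks = {{1}, Finset.Icc 2 n} ∨
        σ.blocks = {insert 1 (Finset.Icc 3 n), {2}}} := by
    ext σ
    simp only [Set.mem_setOf_eq]
    constructor
    · rintro ⟨h1, h2⟩
      exact forward hn σ h1 h2
    · rintro (h | h | h)
      · refine ⟨avoids123_of_card_le_two σ ?_, avoid12_3_single σ h⟩
        rw [h]; simp
      · refine ⟨avoids123_of_card_le_two σ ?_, avoid12_3_two σ h⟩
        rw [h]
        exact le_trans (Finset.card_insert_le _ _) (by simp)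
      · refine ⟨avoids123_of_card_le_two σ ?_, avoid12_3_three σ h⟩
        rw [h]
        exact le_trans (Finset.card_insert_le _ _) (by simp)
  refine ⟨hset, ?_⟩
  -- construct the three partitions
  have hne1 : (Finset.Icc 1 n).Nonempty := Finset.nonempty_Icc.mpr (by omega)
  have hne2 : (Finset.Icc 2 n).Nonempty := Finset.nonempty_Icc.mpr (by omega)
  set A1 : Finset (Finset ℕ) := {Finset.Icc 1 n} with hA1
  set A2 : Finset (Finset ℕ) := {{1}, Finset.Icc 2 n} with hA2
  set A3 : Finset (Finset ℕ) := {insert 1 (Finset.Icc 3 n), {2}} with hA3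
  have hex1 : ∃ σ : SetPartition n, σ.blocks = A1 := ⟨⟨A1, by intro B hB; simp [hA1] at hB; subst hB; exact hne1,
    by intro B hB C hC hne; simp [hA1] at hB hC; subst hB; subst hC; exact absurd rfl hne,
    by simp [hA1]⟩, rfl⟩
  have hex2 : ∃ σ : SetPartition n, σ.blocks = A2 := ⟨⟨A2,
    by
      intro B hB; simp [hA2] at hB
      rcases hB with rfl | rfl
      · exact Finset.singleton_nonempty 1
      · exact hne2,
    by
      intro B hB C hC hne; simp [hA2] at hB hC
      rcases hB with rfl | rfl <;> rcases hC with rfl | rfl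
      · exact absurd rfl hne
      · rw [Finset.disjoint_left]; intro a ha; simp at ha ⊢; omega
      · rw [Finset.disjoint_left]; intro a ha; simp at ha ⊢; omega
      · exact absurd rfl hne,
    by
      rw [hA2, Finset.sup_insert, Finset.sup_singleton]
      ext k; simp; omega⟩, rfl⟩
  have hex3 : ∃ σ : SetPartition n, σ.blocks = A3 := ⟨⟨A3,
    by
      intro B hB; simp [hA3] at hB
      rcases hB with rfl | rfl
      · exact Finset.insert_nonempty _ _
      · exact Finset.singleton_nonempty 2,
    by
      intro B hB C hC hne; simp [hA3] at hB hC
      rcases hB with rfl | rfl <;> rcases hC with rfl | rfl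
      · exact absurd rfl hne
      · rw [Finset.disjoint_left]; intro a ha; simp at ha ⊢; omega
      · rw [Finset.disjoint_left]; intro a ha; simp at ha ⊢; omega
      · exact absurd rfl hne,
    by
      rw [hA3, Finset.sup_insert, Finset.sup_singleton]
      ext k; simp; omega⟩, rfl⟩
  obtain ⟨σ1, hσ1⟩ := hex1
  obtain ⟨σ2, hσ2⟩ := hex2
  obtain ⟨σ3, hσ3⟩ := hex3
  have dA12 : A1 ≠ A2 := by
    intro h
    have h1 : ({1} : Finset ℕ) ∈ A1 := by rw [h, hA2]; simp
    rw [hA1, Finset.mem_singleton] at h1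
    have h2 : (2 : ℕ) ∈ Finset.Icc 1 n := by simp; omega
    rw [← h1] at h2
    simp at h2
  have dA13 : A1 ≠ A3 := by
    intro h
    have h1 : ({2} : Finset ℕ) ∈ A1 := by rw [h, hA3]; simp
    rw [hA1, Finset.mem_singleton] at h1
    have h2 : (1 : ℕ) ∈ Finset.Icc 1 n := by simp; omega
    rw [← h1] at h2
    simp at h2
  have dA23 : A2 ≠ A3 := by
    intro h
    have h1 : ({2} : Finset ℕ) ∈ A2 := by rw [h, hA3]; simp
    rw [hA2] at h1
    simp only [Finset.mem_insert, Finset.mem_singleton] at h1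
    rcases h1 with h1 | h1
    · exact absurd h1 (by decide)
    · have h2 : n ∈ Finset.Icc 2 n := by simp; omega
      rw [← h1] at h2
      simp at h2
      omega
  have d12 : σ1 ≠ σ2 := fun h => dA12 (by rw [← hσ1, ← hσ2, h])
  have d13 : σ1 ≠ σ3 := fun h => dA13 (by rw [← hσ1, ← hσ3, h])
  have d23 : σ2 ≠ σ3 := fun h => dA23 (by rw [← hσ2, ← hσ3, h])
  rw [hset]
  have hset2 : {σ : SetPartition n |
        σ.blocks = {Finset.Icc 1 n} ∨
        σ.blocks = {{1}, Finset.Icc 2 n} ∨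
        σ.blocks = {insert 1 (Finset.Icc 3 n), {2}}} = {σ1, σ2, σ3} := by
    ext τ
    simp only [Set.mem_setOf_eq, Set.mem_insert_iff, Set.mem_singleton_iff,
      ← hA1, ← hA2, ← hA3]
    constructor
    · rintro (h | h | h)
      · exact Or.inl (SetPartition.ext' (h.trans hσ1.symm))
      · exact Or.inr (Or.inl (SetPartition.ext' (h.trans hσ2.symm)))
      · exact Or.inr (Or.inr (SetPartition.ext' (h.trans hσ3.symm)))
    · rintro (rfl | rfl | rfl)
      · exact Or.inl hσ1
      · exact Or.inr (Or.inl hσ2)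
      · exact Or.inr (Or.inr hσ3)
  rw [hset2]
  rw [Set.ncard_insert_of_notMem (by simp [d12, d13])]
  rw [Set.ncard_pair d23]
end

section
/- For all n ≥ 3, the set of partitions of [n] avoiding both 1/23 and 12/3 is exactly {12...n, 1/2/.../n, 1n/2/3/.../(n-1)}, hence has exactly 3 elements. -/
open Finset

namespace SetPartition
variable {n : ℕ} (σ : SetPartition n)

lemma contains_1_23_iff : σ.Contains pat1_23 ↔
    ∃ a b c B C, a < b ∧ b < c ∧ B ∈ σ.blocks ∧ C ∈ σ.blocks ∧ B ≠ C ∧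
      a ∈ B ∧ b ∈ C ∧ c ∈ C := by
  constructor
  · rintro ⟨f, hf, g, hg1, hg2, hg3⟩
    have m1 : ({1} : Finset ℕ) ∈ pat1_23.blocks := by decide
    have m2 : ({2, 3} : Finset ℕ) ∈ pat1_23.blocks := by decide
    have e1 : (1:ℕ) ∈ (Finset.Icc 1 3 : Set ℕ) := by simp
    have e2 : (2:ℕ) ∈ (Finset.Icc 1 3 : Set ℕ) := by simp
    have e3 : (3:ℕ) ∈ (Finset.Icc 1 3 : Set ℕ) := by simp
    refine ⟨f 1, f 2, f 3, g {1}, g {2,3}, hf e1 e2 (by norm_num), hf e2 e3 (by norm_num),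
      hg1 _ m1, hg1 _ m2, ?_, hg3 _ m1 1 (by decide), hg3 _ m2 2 (by decide),
      hg3 _ m2 3 (by decide)⟩
    intro h
    exact absurd (hg2 _ m1 _ m2 h) (by decide)
  · rintro ⟨a, b, c, B, C, hab, hbc, hB, hC, hne, haB, hbC, hcC⟩
    have ne23 : ¬ (({2,3} : Finset ℕ) = {1}) := by decide
    refine ⟨fun x => if x ≤ 1 then a else if x = 2 then b else c, ?_,
      fun S => if S = {1} then B else C, ?_, ?_, ?_⟩
    · intro x hx y hy hxy
      simp only [Finset.coe_Icc, Set.mem_Icc] at hx hy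
      obtain ⟨hx1, hx3⟩ := hx
      obtain ⟨hy1, hy3⟩ := hy
      interval_cases x <;> interval_cases y <;> simp <;> omega
    · intro S hS
      rcases Finset.mem_insert.mp hS with rfl | hS
      · simpa using hB
      · rcases Finset.mem_singleton.mp hS with rfl
        simpa [ne23] using hC
    · intro S hS T hT hg
      rcases Finset.mem_insert.mp hS with rfl | hS
      · rcases Finset.mem_insert.mp hT with rfl | hT
        · rfl
        · rcases Finset.mem_singleton.mp hT with rfl
          simp only [if_pos rfl, if_neg ne23] at hg
          exact absurd hg hne
      · rcases Finset.mem_singleton.mp hS with rfl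
        rcases Finset.mem_insert.mp hT with rfl | hT
        · simp only [if_pos rfl, if_neg ne23] at hg
          exact absurd hg.symm hne
        · rcases Finset.mem_singleton.mp hT with rfl
          rfl
    · intro S hS x hx
      rcases Finset.mem_insert.mp hS with rfl | hS
      · fin_cases hx
        simpa using haB
      · rcases Finset.mem_singleton.mp hS with rfl
        fin_cases hx
        · simpa [ne23] using hbC
        · simpa [ne23] using hcC

lemma contains_12_3_iff : σ.Contains pat12_3 ↔
    ∃ a b c B C, a < b ∧ b < c ∧ B ∈ σ.blocks ∧ C ∈ σ.blocks ∧ B ≠ C ∧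
      a ∈ B ∧ b ∈ B ∧ c ∈ C := by
  constructor
  · rintro ⟨f, hf, g, hg1, hg2, hg3⟩
    have m1 : ({1, 2} : Finset ℕ) ∈ pat12_3.blocks := by decide
    have m2 : ({3} : Finset ℕ) ∈ pat12_3.blocks := by decide
    have e1 : (1:ℕ) ∈ (Finset.Icc 1 3 : Set ℕ) := by simp
    have e2 : (2:ℕ) ∈ (Finset.Icc 1 3 : Set ℕ) := by simp
    have e3 : (3:ℕ) ∈ (Finset.Icc 1 3 : Set ℕ) := by simp
    refine ⟨f 1, f 2, f 3, g {1,2}, g {3}, hf e1 e2 (by norm_num), hf e2 e3 (by norm_num),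
      hg1 _ m1, hg1 _ m2, ?_, hg3 _ m1 1 (by decide), hg3 _ m1 2 (by decide),
      hg3 _ m2 3 (by decide)⟩
    intro h
    exact absurd (hg2 _ m1 _ m2 h) (by decide)
  · rintro ⟨a, b, c, B, C, hab, hbc, hB, hC, hne, haB, hbB, hcC⟩
    have ne3 : ¬ (({3} : Finset ℕ) = {1, 2}) := by decide
    refine ⟨fun x => if x ≤ 1 then a else if x = 2 then b else c, ?_,
      fun S => if S = {1, 2} then B else C, ?_, ?_, ?_⟩
    · intro x hx y hy hxy
      simp only [Finset.coe_Icc, Set.mem_Icc] at hx hy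
      obtain ⟨hx1, hx3⟩ := hx
      obtain ⟨hy1, hy3⟩ := hy
      interval_cases x <;> interval_cases y <;> simp <;> omega
    · intro S hS
      rcases Finset.mem_insert.mp hS with rfl | hS
      · simpa using hB
      · rcases Finset.mem_singleton.mp hS with rfl
        simpa [ne3] using hC
    · intro S hS T hT hg
      rcases Finset.mem_insert.mp hS with rfl | hS
      · rcases Finset.mem_insert.mp hT with rfl | hT
        · rfl
        · rcases Finset.mem_singleton.mp hT with rfl
          simp only [if_pos rfl, if_neg ne3] at hg
          exact absurd hg hne
      · rcases Finset.mem_singleton.mp hS with rfl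
        rcases Finset.mem_insert.mp hT with rfl | hT
        · simp only [if_pos rfl, if_neg ne3] at hg
          exact absurd hg.symm hne
        · rcases Finset.mem_singleton.mp hT with rfl
          rfl
    · intro S hS x hx
      rcases Finset.mem_insert.mp hS with rfl | hS
      · fin_cases hx
        · simpa using haB
        · simpa using hbB
      · rcases Finset.mem_singleton.mp hS with rfl
        fin_cases hx
        simpa [ne3] using hcC

variable {n : ℕ} (σ : SetPartition n)

lemma block_subset {B : Finset ℕ} (hB : B ∈ σ.blocks) : B ⊆ Finset.Icc 1 n := by
  have := Finset.le_sup (f := id) hB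
  rwa [σ.cover] at this

lemma exists_block {x : ℕ} (hx : x ∈ Finset.Icc 1 n) : ∃ B ∈ σ.blocks, x ∈ B := by
  rw [← σ.cover] at hx
  simpa [Finset.mem_sup] using hx

lemma ext'_s3 {σ τ : SetPartition n} (h : σ.blocks = τ.blocks) : σ = τ := by
  cases σ; cases τ; simp_all

lemma classification (hn : 3 ≤ n) (h1 : σ.Avoids pat1_23) (h2 : σ.Avoids pat12_3) :
    σ.blocks = {Finset.Icc 1 n} ∨
    σ.blocks = (Finset.Icc 1 n).image (fun x => ({x} : Finset ℕ)) ∨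
    σ.blocks = insert ({1, n} : Finset ℕ)
      ((Finset.Icc 2 (n - 1)).image (fun x => ({x} : Finset ℕ))) := by
  have A1 : ∀ C ∈ σ.blocks, ∀ b ∈ C, ∀ c ∈ C, b < c →
      ∀ a ∈ Finset.Icc 1 n, a < b → a ∈ C := by
    intro C hC b hb c hc hbc a ha hab
    obtain ⟨B, hB, haB⟩ := σ.exists_block ha
    by_contra hcon
    exact h1 ((σ.contains_1_23_iff).mpr
      ⟨a, b, c, B, C, hab, hbc, hB, hC, fun e => hcon (e ▸ haB), haB, hb, hc⟩)
  have A2 : ∀ B ∈ σ.blocks, ∀ a ∈ B, ∀ b ∈ B, a < b →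
      ∀ c ∈ Finset.Icc 1 n, b < c → c ∈ B := by
    intro B hB a ha b hb hab c hc hbc
    obtain ⟨C, hC, hcC⟩ := σ.exists_block hc
    by_contra hcon
    exact h2 ((σ.contains_12_3_iff).mpr
      ⟨a, b, c, B, C, hab, hbc, hB, hC, fun e => hcon (e ▸ hcC), ha, hb, hcC⟩)
  by_cases hsing : ∀ B ∈ σ.blocks, ∀ x ∈ B, ∀ y ∈ B, x = y
  · right; left
    ext S
    simp only [Finset.mem_image]
    constructor
    · intro hS
      obtain ⟨x, hx⟩ := σ.nonempty_mem S hS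
      refine ⟨x, σ.block_subset hS hx, ?_⟩
      apply (Finset.eq_singleton_iff_unique_mem.mpr ⟨hx, fun y hy => hsing S hS y hy x hx⟩).symm
    · rintro ⟨x, hx, rfl⟩
      obtain ⟨B, hB, hxB⟩ := σ.exists_block hx
      have : B = {x} := Finset.eq_singleton_iff_unique_mem.mpr
        ⟨hxB, fun y hy => hsing B hB y hy x hxB⟩
      rwa [← this]
  · push_neg at hsing
    obtain ⟨B, hB, x, hx, y, hy, hxy⟩ := hsing
    have hBne : B.Nonempty := ⟨x, hx⟩
    set a := B.min' hBne with ha_def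
    have haB : a ∈ B := B.min'_mem hBne
    have herase : (B.erase a).Nonempty := by
      rcases eq_or_ne x a with rfl | hxa
      · exact ⟨y, Finset.mem_erase.mpr ⟨fun e => hxy e.symm, hy⟩⟩
      · exact ⟨x, Finset.mem_erase.mpr ⟨hxa, hx⟩⟩
    set b := (B.erase a).min' herase with hb_def
    have hbB' : b ∈ B.erase a := Finset.min'_mem _ herase
    have hbB : b ∈ B := (Finset.mem_erase.mp hbB').2
    have hba : b ≠ a := (Finset.mem_erase.mp hbB').1
    have hab : a < b := lt_of_le_of_ne (B.min'_le b hbB) (Ne.symm hba)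
    have hBsub := σ.block_subset hB
    have haIcc := hBsub haB
    have hbIcc := hBsub hbB
    rw [Finset.mem_Icc] at haIcc hbIcc
    have ha1 : a = 1 := by
      by_contra hne
      have h1lt : 1 < a := by omega
      have : (1:ℕ) ∈ B := A1 B hB a haB b hbB hab 1 (by simp; omega) h1lt
      have := B.min'_le 1 this
      omega
    have hgap : ∀ z, a < z → z < b → z ∉ B := by
      intro z hz1 hz2 hzB
      have : b ≤ z := Finset.min'_le _ z (Finset.mem_erase.mpr ⟨by omega, hzB⟩)
      omega
    have hup : ∀ z ∈ Finset.Icc 1 n, b < z → z ∈ B := fun z hz hbz =>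
      A2 B hB a haB b hbB hab z hz hbz
    have hBeq : B = insert 1 (Finset.Icc b n) := by
      ext z
      simp only [Finset.mem_insert, Finset.mem_Icc]
      constructor
      · intro hz
        have := hBsub hz
        rw [Finset.mem_Icc] at this
        rcases eq_or_ne z 1 with rfl | hz1
        · exact Or.inl rfl
        · right
          refine ⟨?_, this.2⟩
          by_contra hc
          exact hgap z (by omega) (by omega) hz
      · rintro (rfl | ⟨hz1, hz2⟩)
        · rwa [ha1] at haB
        · rcases eq_or_ne z b with rfl | hzb
          · exact hbB
          · exact hup z (by simp; omega) (by omega)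
    by_cases hb2 : b = 2
    · left
      have hBfull : B = Finset.Icc 1 n := by
        rw [hBeq, hb2]
        ext z
        simp only [Finset.mem_insert, Finset.mem_Icc]
        omega
      ext C
      simp only [Finset.mem_singleton]
      constructor
      · intro hC
        by_contra hne
        obtain ⟨w, hw⟩ := σ.nonempty_mem C hC
        have hwB : w ∈ B := hBfull ▸ σ.block_subset hC hw
        exact Finset.disjoint_left.mp (σ.disj C hC B hB (fun e => hne (e ▸ hBfull))) hw hwB
      · rintro rfl
        exact hBfull ▸ hB
    · have hb3 : 3 ≤ b := by omega
      have hbn : b = n := by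
        by_contra hne
        have hbn' : b < n := by omega
        have hnB : n ∈ B := hup n (by simp; omega) hbn'
        have h2B : (2:ℕ) ∈ B := A1 B hB b hbB n hnB hbn' 2 (by simp; omega) (by omega)
        exact hgap 2 (by omega) (by omega) h2B
      right; right
      have hBeq2 : B = {1, n} := by
        rw [hBeq, hbn]
        ext z
        simp only [Finset.mem_insert, Finset.mem_Icc, Finset.mem_singleton]
        omega
      have hsingC : ∀ C ∈ σ.blocks, C ≠ B → ∃ z, 2 ≤ z ∧ z ≤ n - 1 ∧ C = {z} := by
        intro C hC hne
        have hdisj := σ.disj C hC B hB hne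
        have hCsub := σ.block_subset hC
        have hnotB : ∀ w ∈ C, w ≠ 1 ∧ w ≠ n := by
          intro w hw
          constructor <;> intro e <;>
            exact Finset.disjoint_left.mp hdisj hw (hBeq2 ▸ by simp [e])
        obtain ⟨u, hu⟩ := σ.nonempty_mem C hC
        have huIcc := hCsub hu
        rw [Finset.mem_Icc] at huIcc
        obtain ⟨hu1, hun⟩ := hnotB u hu
        refine ⟨u, by omega, by omega, ?_⟩
        apply Finset.eq_singleton_iff_unique_mem.mpr
        refine ⟨hu, fun v hv => ?_⟩
        by_contra hvu
        have hvIcc := hCsub hv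
        rw [Finset.mem_Icc] at hvIcc
        obtain ⟨hv1, hvn⟩ := hnotB v hv
        have hnC : n ∈ C := by
          rcases lt_or_gt_of_ne hvu with h | h
          · exact A2 C hC v hv u hu h n (by simp; omega) (by omega)
          · exact A2 C hC u hu v hv h n (by simp; omega) (by omega)
        exact (hnotB n hnC).2 rfl
      ext C
      simp only [Finset.mem_insert, Finset.mem_image, Finset.mem_Icc]
      constructor
      · intro hC
        by_cases hCB : C = B
        · exact Or.inl (hCB.trans hBeq2)
        · obtain ⟨z, hz2, hz3, rfl⟩ := hsingC C hC hCB
          exact Or.inr ⟨z, ⟨hz2, hz3⟩, rfl⟩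
      · rintro (rfl | ⟨z, ⟨hz2, hz3⟩, rfl⟩)
        · exact hBeq2 ▸ hB
        · obtain ⟨D, hD, hzD⟩ := σ.exists_block (by simp; omega : z ∈ Finset.Icc 1 n)
          have hDB : D ≠ B := by
            intro e
            rw [e, hBeq2] at hzD
            simp only [Finset.mem_insert, Finset.mem_singleton] at hzD
            omega
          obtain ⟨w, _, _, hDeq⟩ := hsingC D hD hDB
          rw [hDeq] at hzD
          simp only [Finset.mem_singleton] at hzD
          subst hzD
          rwa [← hDeq]


lemma avoids_of (hn : 3 ≤ n)
    (h : σ.blocks = {Finset.Icc 1 n} ∨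
      σ.blocks = (Finset.Icc 1 n).image (fun x => ({x} : Finset ℕ)) ∨
      σ.blocks = insert ({1, n} : Finset ℕ)
        ((Finset.Icc 2 (n - 1)).image (fun x => ({x} : Finset ℕ)))) :
    σ.Avoids pat1_23 ∧ σ.Avoids pat12_3 := by
  rcases h with h | h | h
  · constructor <;> intro hc
    · obtain ⟨a, b, c, B, C, hab, hbc, hB, hC, hne, haB, hbC, hcC⟩ :=
        (σ.contains_1_23_iff).mp hc
      rw [h, Finset.mem_singleton] at hB hC
      exact hne (hB.trans hC.symm)
    · obtain ⟨a, b, c, B, C, hab, hbc, hB, hC, hne, haB, hbB, hcC⟩ :=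
        (σ.contains_12_3_iff).mp hc
      rw [h, Finset.mem_singleton] at hB hC
      exact hne (hB.trans hC.symm)
  · constructor <;> intro hc
    · obtain ⟨a, b, c, B, C, hab, hbc, hB, hC, hne, haB, hbC, hcC⟩ :=
        (σ.contains_1_23_iff).mp hc
      rw [h, Finset.mem_image] at hC
      obtain ⟨z, _, rfl⟩ := hC
      simp only [Finset.mem_singleton] at hbC hcC
      omega
    · obtain ⟨a, b, c, B, C, hab, hbc, hB, hC, hne, haB, hbB, hcC⟩ :=
        (σ.contains_12_3_iff).mp hc
      rw [h, Finset.mem_image] at hB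
      obtain ⟨z, _, rfl⟩ := hB
      simp only [Finset.mem_singleton] at haB hbB
      omega
  · constructor <;> intro hc
    · obtain ⟨a, b, c, B, C, hab, hbc, hB, hC, hne, haB, hbC, hcC⟩ :=
        (σ.contains_1_23_iff).mp hc
      have haIcc := σ.block_subset hB haB
      rw [Finset.mem_Icc] at haIcc
      rw [h, Finset.mem_insert, Finset.mem_image] at hC
      rcases hC with rfl | ⟨z, _, rfl⟩
      · simp only [Finset.mem_insert, Finset.mem_singleton] at hbC hcC
        omega
      · simp only [Finset.mem_singleton] at hbC hcC
        omega
    · obtain ⟨a, b, c, B, C, hab, hbc, hB, hC, hne, haB, hbB, hcC⟩ :=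
        (σ.contains_12_3_iff).mp hc
      have hcIcc := σ.block_subset hC hcC
      rw [Finset.mem_Icc] at hcIcc
      rw [h, Finset.mem_insert, Finset.mem_image] at hB
      rcases hB with rfl | ⟨z, _, rfl⟩
      · simp only [Finset.mem_insert, Finset.mem_singleton] at haB hbB
        omega
      · simp only [Finset.mem_singleton] at haB hbB
        omega


end SetPartition


def sFull (n : ℕ) (hn : 3 ≤ n) : SetPartition n where
  blocks := {Finset.Icc 1 n}
  nonempty_mem := by
    intro B hB
    rw [Finset.mem_singleton] at hB
    subst hB
    exact ⟨1, by simp; omega⟩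
  disj := by
    intro B hB C hC hne
    rw [Finset.mem_singleton] at hB hC
    exact absurd (hB.trans hC.symm) hne
  cover := by simp

def sSing (n : ℕ) (hn : 3 ≤ n) : SetPartition n where
  blocks := (Finset.Icc 1 n).image (fun x => ({x} : Finset ℕ))
  nonempty_mem := by
    intro B hB
    rw [Finset.mem_image] at hB
    obtain ⟨x, _, rfl⟩ := hB
    exact ⟨x, by simp⟩
  disj := by
    intro B hB C hC hne
    rw [Finset.mem_image] at hB hC
    obtain ⟨x, _, rfl⟩ := hB
    obtain ⟨y, _, rfl⟩ := hC
    have : x ≠ y := fun e => hne (by rw [e])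
    simp [this, Ne.symm this]
  cover := by
    ext z
    simp only [Finset.mem_sup, Finset.mem_image, Finset.mem_Icc, id]
    constructor
    · rintro ⟨B, ⟨x, hx, rfl⟩, hz⟩
      simp only [Finset.mem_singleton] at hz
      subst hz; exact hx
    · intro hz
      exact ⟨{z}, ⟨z, hz, rfl⟩, by simp⟩

def sOneN (n : ℕ) (hn : 3 ≤ n) : SetPartition n where
  blocks := insert ({1, n} : Finset ℕ)
      ((Finset.Icc 2 (n - 1)).image (fun x => ({x} : Finset ℕ)))
  nonempty_mem := by
    intro B hB
    rw [Finset.mem_insert, Finset.mem_image] at hB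
    rcases hB with rfl | ⟨x, _, rfl⟩
    · exact ⟨1, by simp⟩
    · exact ⟨x, by simp⟩
  disj := by
    intro B hB C hC hne
    rw [Finset.mem_insert, Finset.mem_image] at hB hC
    rcases hB with rfl | ⟨x, hx, rfl⟩ <;> rcases hC with rfl | ⟨y, hy, rfl⟩
    · exact absurd rfl hne
    · rw [Finset.mem_Icc] at hy
      rw [Finset.disjoint_right]
      intro w hw
      simp only [Finset.mem_singleton] at hw
      subst hw
      simp only [Finset.mem_insert, Finset.mem_singleton]
      omega
    · rw [Finset.mem_Icc] at hx
      rw [Finset.disjoint_left]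
      intro w hw
      simp only [Finset.mem_singleton] at hw
      subst hw
      simp only [Finset.mem_insert, Finset.mem_singleton]
      omega
    · have : x ≠ y := fun e => hne (by rw [e])
      simp [this, Ne.symm this]
  cover := by
    ext z
    simp only [Finset.mem_sup, Finset.mem_insert, Finset.mem_image, Finset.mem_Icc, id]
    constructor
    · rintro ⟨B, rfl | ⟨x, hx, rfl⟩, hz⟩
      · simp only [Finset.mem_insert, Finset.mem_singleton] at hz
        omega
      · simp only [Finset.mem_singleton] at hz
        omega
    · intro hz
      by_cases h1 : z = 1
      · exact ⟨{1, n}, Or.inl rfl, by simp [h1]⟩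
      · by_cases h2 : z = n
        · exact ⟨{1, n}, Or.inl rfl, by simp [h2]⟩
        · exact ⟨{z}, Or.inr ⟨z, by omega, rfl⟩, by simp⟩
theorem stmt3 (n : ℕ) (hn : 3 ≤ n) :
    ({σ : SetPartition n | σ.Avoids pat1_23 ∧ σ.Avoids pat12_3} =
      {σ : SetPartition n |
        σ.blocks = {Finset.Icc 1 n} ∨
        σ.blocks = (Finset.Icc 1 n).image (fun x => ({x} : Finset ℕ)) ∨
        σ.blocks = insert ({1, n} : Finset ℕ)
          ((Finset.Icc 2 (n - 1)).image (fun x => ({x} : Finset ℕ)))}) ∧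
    ({σ : SetPartition n | σ.Avoids pat1_23 ∧ σ.Avoids pat12_3}).ncard = 3 := by
  have hset : {σ : SetPartition n | σ.Avoids pat1_23 ∧ σ.Avoids pat12_3} =
      {σ : SetPartition n |
        σ.blocks = {Finset.Icc 1 n} ∨
        σ.blocks = (Finset.Icc 1 n).image (fun x => ({x} : Finset ℕ)) ∨
        σ.blocks = insert ({1, n} : Finset ℕ)
          ((Finset.Icc 2 (n - 1)).image (fun x => ({x} : Finset ℕ)))} := by
    ext σ
    simp only [Set.mem_setOf_eq]
    exact ⟨fun h => σ.classification hn h.1 h.2, fun h => σ.avoids_of hn h⟩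
  refine ⟨hset, ?_⟩
  rw [hset]
  have h3 : {σ : SetPartition n |
        σ.blocks = {Finset.Icc 1 n} ∨
        σ.blocks = (Finset.Icc 1 n).image (fun x => ({x} : Finset ℕ)) ∨
        σ.blocks = insert ({1, n} : Finset ℕ)
          ((Finset.Icc 2 (n - 1)).image (fun x => ({x} : Finset ℕ)))} =
      {sFull n hn, sSing n hn, sOneN n hn} := by
    ext σ
    simp only [Set.mem_setOf_eq, Set.mem_insert_iff, Set.mem_singleton_iff]
    constructor
    · rintro (h | h | h)
      · exact Or.inl (SetPartition.ext'_s3 h)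
      · exact Or.inr (Or.inl (SetPartition.ext'_s3 h))
      · exact Or.inr (Or.inr (SetPartition.ext'_s3 h))
    · rintro (rfl | rfl | rfl)
      · exact Or.inl rfl
      · exact Or.inr (Or.inl rfl)
      · exact Or.inr (Or.inr rfl)
  rw [h3]
  have hmem1 : (1:ℕ) ∈ Finset.Icc 1 n := by simp; omega
  have hmem2 : (2:ℕ) ∈ Finset.Icc 1 n := by simp; omega
  have d12 : sFull n hn ≠ sSing n hn := by
    intro e
    have hb : ({Finset.Icc 1 n} : Finset (Finset ℕ)) =
        (Finset.Icc 1 n).image (fun x => ({x} : Finset ℕ)) := congrArg SetPartition.blocks e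
    have : Finset.Icc 1 n ∈ (Finset.Icc 1 n).image (fun x => ({x} : Finset ℕ)) := by
      rw [← hb]; exact Finset.mem_singleton_self _
    rw [Finset.mem_image] at this
    obtain ⟨x, _, hx⟩ := this
    have h1 : (1:ℕ) ∈ ({x} : Finset ℕ) := hx ▸ hmem1
    have h2 : (2:ℕ) ∈ ({x} : Finset ℕ) := hx ▸ hmem2
    simp only [Finset.mem_singleton] at h1 h2
    omega
  have d13 : sFull n hn ≠ sOneN n hn := by
    intro e
    have hb : ({Finset.Icc 1 n} : Finset (Finset ℕ)) =
        insert ({1, n} : Finset ℕ)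
          ((Finset.Icc 2 (n - 1)).image (fun x => ({x} : Finset ℕ))) :=
      congrArg SetPartition.blocks e
    have : Finset.Icc 1 n ∈ insert ({1, n} : Finset ℕ)
        ((Finset.Icc 2 (n - 1)).image (fun x => ({x} : Finset ℕ))) := by
      rw [← hb]; exact Finset.mem_singleton_self _
    rw [Finset.mem_insert, Finset.mem_image] at this
    rcases this with h | ⟨x, _, hx⟩
    · have h2 : (2:ℕ) ∈ ({1, n} : Finset ℕ) := h ▸ hmem2
      simp only [Finset.mem_insert, Finset.mem_singleton] at h2
      omega
    · have h1 : (1:ℕ) ∈ ({x} : Finset ℕ) := hx ▸ hmem1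
      have h2 : (2:ℕ) ∈ ({x} : Finset ℕ) := hx ▸ hmem2
      simp only [Finset.mem_singleton] at h1 h2
      omega
  have d23 : sSing n hn ≠ sOneN n hn := by
    intro e
    have hb : (Finset.Icc 1 n).image (fun x => ({x} : Finset ℕ)) =
        insert ({1, n} : Finset ℕ)
          ((Finset.Icc 2 (n - 1)).image (fun x => ({x} : Finset ℕ))) :=
      congrArg SetPartition.blocks e
    have : ({1, n} : Finset ℕ) ∈ (Finset.Icc 1 n).image (fun x => ({x} : Finset ℕ)) := by
      rw [hb]; exact Finset.mem_insert_self _ _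
    rw [Finset.mem_image] at this
    obtain ⟨x, _, hx⟩ := this
    have h1 : (1:ℕ) ∈ ({x} : Finset ℕ) := by rw [hx]; simp
    have h2 : n ∈ ({x} : Finset ℕ) := by rw [hx]; simp
    simp only [Finset.mem_singleton] at h1 h2
    omega
  rw [Set.ncard_insert_of_notMem (by simp [d12, d13])
    ((Set.finite_singleton _).insert _), Set.ncard_pair d23]
end

section
/- For all n ≥ 1, the number of partitions of [n] avoiding both 12/3 and 123 is exactly n; these are exactly the partitions B₁/.../B_k with min B_i = i for all i and k = n−1 or k = n. -/
open Finset

lemma block_subset {n : ℕ} (σ : SetPartition n) {B : Finset ℕ} (hB : B ∈ σ.blocks) :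
    B ⊆ Finset.Icc 1 n := by
  have := Finset.le_sup (f := id) hB
  rw [σ.cover] at this
  exact this

lemma contains_pat123 {n : ℕ} (σ : SetPartition n) {B : Finset ℕ} {x y z : ℕ}
    (hB : B ∈ σ.blocks) (hx : x ∈ B) (hy : y ∈ B) (hz : z ∈ B)
    (h1 : x < y) (h2 : y < z) : σ.Contains pat123 := by
  refine ⟨fun i => if i ≤ 1 then x else if i ≤ 2 then y else z, ?_, fun _ => B, ?_, ?_, ?_⟩
  · intro p hp q hq hpq
    simp only [Finset.coe_Icc, Set.mem_Icc] at hp hq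
    obtain ⟨hp1, hp2⟩ := hp; obtain ⟨hq1, hq2⟩ := hq
    interval_cases p <;> interval_cases q <;> simp <;> omega
  · intro B' _; exact hB
  · intro B' hB' C' hC' _
    simp [pat123] at hB' hC'; rw [hB', hC']
  · intro B' hB' t ht
    simp [pat123] at hB'; subst hB'
    fin_cases ht <;> simp [hx, hy, hz]

lemma contains_pat12_3 {n : ℕ} (σ : SetPartition n) {B C : Finset ℕ} {x y z : ℕ}
    (hB : B ∈ σ.blocks) (hC : C ∈ σ.blocks) (hBC : B ≠ C)
    (hx : x ∈ B) (hy : y ∈ B) (hz : z ∈ C)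
    (h1 : x < y) (h2 : y < z) : σ.Contains pat12_3 := by
  refine ⟨fun i => if i ≤ 1 then x else if i ≤ 2 then y else z, ?_,
    fun S => if S = {3} then C else B, ?_, ?_, ?_⟩
  · intro p hp q hq hpq
    simp only [Finset.coe_Icc, Set.mem_Icc] at hp hq
    obtain ⟨hp1, hp2⟩ := hp; obtain ⟨hq1, hq2⟩ := hq
    interval_cases p <;> interval_cases q <;> simp <;> omega
  · intro B' hB'
    have h12 : (({1, 2} : Finset ℕ)) ≠ {3} := by decide
    simp [pat12_3] at hB'
    rcases hB' with h | h <;> subst h <;> simp [h12, hB, hC]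
  · intro B' hB' C' hC' hg
    have h12 : (({1, 2} : Finset ℕ)) ≠ {3} := by decide
    simp [pat12_3] at hB' hC'
    rcases hB' with h | h <;> rcases hC' with h' | h' <;> subst h <;> subst h' <;>
      simp [h12] at hg ⊢ <;> first | exact absurd hg hBC | exact absurd hg.symm hBC
  · intro B' hB' t ht
    have h12 : (({1, 2} : Finset ℕ)) ≠ {3} := by decide
    simp [pat12_3] at hB'
    rcases hB' with h | h <;> subst h
    · fin_cases ht <;> simp [h12, hx, hy]
    · fin_cases ht <;> simp [hz]


def Good (n : ℕ) (σ : SetPartition n) : Prop :=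
  ∀ B ∈ σ.blocks, ∀ x ∈ B, ∀ y ∈ B, x < y → y = n

lemma mem_block_le {n : ℕ} (σ : SetPartition n) {B : Finset ℕ} (hB : B ∈ σ.blocks)
    {x : ℕ} (hx : x ∈ B) : 1 ≤ x ∧ x ≤ n := by
  have := block_subset σ hB hx
  simpa using this

lemma exists_block_of_mem {n : ℕ} (σ : SetPartition n) {x : ℕ} (h1 : 1 ≤ x) (h2 : x ≤ n) :
    ∃ B ∈ σ.blocks, x ∈ B := by
  have : x ∈ σ.blocks.sup id := by rw [σ.cover]; simp [h1, h2]
  simpa using (Finset.mem_sup.mp this)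

lemma avoids_iff_good {n : ℕ} (σ : SetPartition n) :
    (σ.Avoids pat12_3 ∧ σ.Avoids pat123) ↔ Good n σ := by
  constructor
  · rintro ⟨h12_3, h123⟩ B hB x hx y hy hxy
    by_contra hyn
    obtain ⟨-, hy2⟩ := mem_block_le σ hB hy
    have hylt : y < n := lt_of_le_of_ne hy2 hyn
    obtain ⟨C, hC, hnC⟩ := exists_block_of_mem σ (le_trans (by omega) hylt.le) le_rfl
    by_cases hCB : C = B
    · subst hCB
      exact h123 (contains_pat123 σ hC hx hy hnC hxy hylt)
    · exact h12_3 (contains_pat12_3 σ hB hC (Ne.symm hCB) hx hy hnC hxy hylt)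
  · intro hg
    have m1 : (1 : ℕ) ∈ (↑(Finset.Icc 1 3) : Set ℕ) := by simp
    have m2 : (2 : ℕ) ∈ (↑(Finset.Icc 1 3) : Set ℕ) := by simp
    have m3 : (3 : ℕ) ∈ (↑(Finset.Icc 1 3) : Set ℕ) := by simp
    constructor
    · rintro ⟨f, hf, g, hg1, hg2, hg3⟩
      have hm12 : ({1, 2} : Finset ℕ) ∈ pat12_3.blocks := by decide
      have hm3 : ({3} : Finset ℕ) ∈ pat12_3.blocks := by decide
      have hf1 : f 1 ∈ g {1, 2} := hg3 _ hm12 1 (by decide)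
      have hf2 : f 2 ∈ g {1, 2} := hg3 _ hm12 2 (by decide)
      have hf3 : f 3 ∈ g {3} := hg3 _ hm3 3 (by decide)
      have h12 : f 1 < f 2 := hf m1 m2 (by norm_num)
      have h23 : f 2 < f 3 := hf m2 m3 (by norm_num)
      have hfn : f 2 = n := hg _ (hg1 _ hm12) _ hf1 _ hf2 h12
      have := (mem_block_le σ (hg1 _ hm3) hf3).2
      omega
    · rintro ⟨f, hf, g, hg1, hg2, hg3⟩
      have hm : ({1, 2, 3} : Finset ℕ) ∈ pat123.blocks := by decide
      have hf1 : f 1 ∈ g {1, 2, 3} := hg3 _ hm 1 (by decide)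
      have hf2 : f 2 ∈ g {1, 2, 3} := hg3 _ hm 2 (by decide)
      have hf3 : f 3 ∈ g {1, 2, 3} := hg3 _ hm 3 (by decide)
      have h12 : f 1 < f 2 := hf m1 m2 (by norm_num)
      have h23 : f 2 < f 3 := hf m2 m3 (by norm_num)
      have e2 : f 2 = n := hg _ (hg1 _ hm) _ hf1 _ hf2 h12
      have e3 : f 3 = n := hg _ (hg1 _ hm) _ hf2 _ hf3 h23
      omega
def blocksOf (n a : ℕ) : Finset (Finset ℕ) :=
  ((((Finset.Icc 1 n).erase n).erase a).image (fun i => {i})) ∪ {insert a {n}}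

lemma mem_blocksOf {n a : ℕ} {B : Finset ℕ} : B ∈ blocksOf n a ↔
    (∃ i, (i ≠ a ∧ i ≠ n ∧ 1 ≤ i ∧ i ≤ n) ∧ B = {i}) ∨ B = insert a {n} := by
  unfold blocksOf
  simp only [Finset.mem_union, Finset.mem_image, Finset.mem_erase, Finset.mem_Icc,
    Finset.mem_singleton]
  constructor
  · rintro (⟨i, ⟨hia, hin, h1, h2⟩, rfl⟩ | h)
    · exact Or.inl ⟨i, ⟨hia, hin, h1, h2⟩, rfl⟩
    · exact Or.inr h
  · rintro (⟨i, ⟨hia, hin, h1, h2⟩, rfl⟩ | h)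
    · exact Or.inl ⟨i, ⟨hia, hin, h1, h2⟩, rfl⟩
    · exact Or.inr h

lemma good_blocksOf {n a : ℕ} (ha1 : 1 ≤ a) (ha2 : a ≤ n) (σ : SetPartition n)
    (hσ : σ.blocks = blocksOf n a) : Good n σ := by
  intro B hB x hx y hy hxy
  rw [hσ, mem_blocksOf] at hB
  rcases hB with ⟨i, hi, rfl⟩ | rfl
  · simp at hx hy; omega
  · simp at hx hy
    rcases hx with rfl | rfl <;> rcases hy with rfl | rfl <;> omega

lemma good_classify {n : ℕ} (hn : 1 ≤ n) (σ : SetPartition n) (hg : Good n σ) :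
    ∃ a, 1 ≤ a ∧ a ≤ n ∧ σ.blocks = blocksOf n a := by
  obtain ⟨Bn, hBn, hnBn⟩ := exists_block_of_mem σ hn le_rfl
  have hBne : Bn.Nonempty := ⟨n, hnBn⟩
  set a := Bn.min' hBne with ha
  have haB : a ∈ Bn := Finset.min'_mem _ _
  obtain ⟨ha1, ha2⟩ := mem_block_le σ hBn haB
  refine ⟨a, ha1, ha2, ?_⟩
  have hBneq : Bn = insert a {n} := by
    apply Finset.Subset.antisymm
    · intro t ht
      rcases eq_or_ne t a with rfl | hta
      · simp
      · have : a < t := lt_of_le_of_ne (Finset.min'_le _ _ ht) (Ne.symm hta)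
        have := hg Bn hBn a haB t ht this
        simp [this]
    · intro t ht
      simp at ht
      rcases ht with rfl | rfl <;> assumption
  -- every other block is a singleton
  have hsing : ∀ C ∈ σ.blocks, C ≠ Bn → ∃ i, i ≠ a ∧ i ≠ n ∧ 1 ≤ i ∧ i ≤ n ∧ C = {i} := by
    intro C hC hCBn
    obtain ⟨i, hiC⟩ := σ.nonempty_mem C hC
    have hCs : C = {i} := by
      apply Finset.Subset.antisymm
      · intro t ht
        simp only [Finset.mem_singleton]
        by_contra hti
        rcases lt_or_gt_of_ne hti with h | h
        · have := hg C hC t ht i hiC h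
          subst this
          exact (Finset.disjoint_left.mp (σ.disj C hC Bn hBn hCBn) hiC) hnBn
        · have := hg C hC i hiC t ht h
          subst this
          exact (Finset.disjoint_left.mp (σ.disj C hC Bn hBn hCBn) ht) hnBn
      · simpa using hiC
    have hin : i ≠ n := by
      rintro rfl
      exact (Finset.disjoint_left.mp (σ.disj C hC Bn hBn hCBn) hiC) hnBn
    have hia : i ≠ a := by
      rintro rfl
      exact (Finset.disjoint_left.mp (σ.disj C hC Bn hBn hCBn) hiC) haB
    obtain ⟨h1, h2⟩ := mem_block_le σ hC hiC
    exact ⟨i, hia, hin, h1, h2, hCs⟩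
  ext B
  rw [mem_blocksOf]
  constructor
  · intro hB
    rcases eq_or_ne B Bn with rfl | hne
    · right; exact hBneq
    · obtain ⟨i, h1, h2, h3, h4, h5⟩ := hsing B hB hne
      exact Or.inl ⟨i, ⟨h1, h2, h3, h4⟩, h5⟩
  · rintro (⟨i, ⟨hia, hin, hi1, hi2⟩, rfl⟩ | rfl)
    · obtain ⟨C, hC, hiC⟩ := exists_block_of_mem σ hi1 hi2
      have hCBn : C ≠ Bn := by
        rintro rfl
        rw [hBneq] at hiC
        simp at hiC
        omega
      obtain ⟨j, _, _, _, _, hCj⟩ := hsing C hC hCBn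
      rw [hCj] at hiC
      simp at hiC
      subst hiC
      rwa [← hCj]
    · rwa [← hBneq]

lemma card_blocksOf {n a : ℕ} (ha1 : 1 ≤ a) (ha2 : a ≤ n) :
    (blocksOf n a).card = if a = n then n else n - 1 := by
  have hnot : insert a {n} ∉
      (((Finset.Icc 1 n).erase n).erase a).image (fun i => ({i} : Finset ℕ)) := by
    simp only [Finset.mem_image, Finset.mem_erase, Finset.mem_Icc]
    rintro ⟨i, ⟨hia, hin, -⟩, hi⟩
    have : n ∈ ({i} : Finset ℕ) := by rw [hi]; simp
    simp at this
    exact hin this.symm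
  rw [blocksOf, Finset.card_union_of_disjoint (Finset.disjoint_singleton_right.mpr hnot),
    Finset.card_image_of_injective _ Finset.singleton_injective, Finset.card_singleton]
  by_cases h : a = n
  · subst h
    rw [Finset.erase_idem, Finset.card_erase_of_mem (by simp; omega), Nat.card_Icc]
    simp; omega
  · rw [Finset.card_erase_of_mem (by simp; omega), Finset.card_erase_of_mem (by simp; omega),
      Nat.card_Icc]
    simp [h]; omega

lemma min_insert_pair {a n : ℕ} (ha : a ≤ n) : (insert a ({n} : Finset ℕ)).min = (a : WithTop ℕ) := by
  rw [Finset.min_insert, Finset.min_singleton]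
  norm_cast
  simp [min_eq_left ha]

lemma mins_blocksOf {n a : ℕ} (ha1 : 1 ≤ a) (ha2 : a ≤ n) (i : ℕ) :
    (∃ B ∈ blocksOf n a, B.min = (i : WithTop ℕ)) ↔
      (1 ≤ i ∧ i ≤ (if a = n then n else n - 1)) := by
  constructor
  · rintro ⟨B, hB, hmin⟩
    rw [mem_blocksOf] at hB
    rcases hB with ⟨j, ⟨hja, hjn, hj1, hj2⟩, rfl⟩ | rfl
    · rw [Finset.min_singleton] at hmin
      have : j = i := by simpa using hmin
      subst this
      split <;> omega
    · rw [min_insert_pair ha2] at hmin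
      have : a = i := by simpa using hmin
      subst this
      split <;> omega
  · rintro ⟨h1, h2⟩
    rcases eq_or_ne i a with rfl | hia
    · exact ⟨insert i {n}, mem_blocksOf.mpr (Or.inr rfl), min_insert_pair ha2⟩
    · have hin : i ≠ n := by
        rcases eq_or_ne a n with rfl | h
        · simp at h2; rintro rfl; exact hia rfl
        · simp [h] at h2; omega
      refine ⟨{i}, mem_blocksOf.mpr (Or.inl ⟨i, ⟨hia, hin, h1, ?_⟩, rfl⟩), Finset.min_singleton⟩
      split at h2 <;> omega

lemma min_coe_mem {B : Finset ℕ} {i : ℕ} (h : B.min = (i : WithTop ℕ)) : i ∈ B :=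
  Finset.mem_of_min h

lemma rhs_surj {n : ℕ} (σ : SetPartition n)
    (hmin : ∀ i : ℕ, i ∈ Finset.Icc 1 σ.blocks.card ↔ ∃ B ∈ σ.blocks, B.min = (i : WithTop ℕ)) :
    ∀ C ∈ σ.blocks, ∃ i, 1 ≤ i ∧ i ≤ σ.blocks.card ∧ C.min = (i : WithTop ℕ) := by
  classical
  set k := σ.blocks.card with hk
  set s := σ.blocks.image Finset.min with hs
  set t := (Finset.Icc 1 k).image (fun i : ℕ => (i : WithTop ℕ)) with ht
  have hts : t ⊆ s := by
    intro x hx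
    rw [ht, Finset.mem_image] at hx
    obtain ⟨i, hi, rfl⟩ := hx
    obtain ⟨B, hB, hBm⟩ := (hmin i).mp hi
    exact Finset.mem_image.mpr ⟨B, hB, hBm⟩
  have hct : t.card = k := by
    rw [ht, Finset.card_image_of_injective _ (fun i j h => by simpa using h), Nat.card_Icc]
    omega
  have hcs : s.card ≤ k := le_trans Finset.card_image_le le_rfl
  have hst : t = s := Finset.eq_of_subset_of_card_le hts (by omega)
  intro C hC
  have : C.min ∈ s := Finset.mem_image.mpr ⟨C, hC, rfl⟩
  rw [← hst, ht, Finset.mem_image] at this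
  obtain ⟨i, hi, hiC⟩ := this
  simp only [Finset.mem_Icc] at hi
  exact ⟨i, hi.1, hi.2, hiC.symm⟩

lemma rhs_classify {n : ℕ} (hn : 1 ≤ n) (σ : SetPartition n)
    (hcard : σ.blocks.card = n ∨ σ.blocks.card = n - 1)
    (hmin : ∀ i : ℕ, i ∈ Finset.Icc 1 σ.blocks.card ↔ ∃ B ∈ σ.blocks, B.min = (i : WithTop ℕ)) :
    ∃ a, 1 ≤ a ∧ a ≤ n ∧ σ.blocks = blocksOf n a := by
  set k := σ.blocks.card with hk
  obtain ⟨Bn, hBn, hnBn⟩ := exists_block_of_mem σ hn le_rfl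
  have hk1 : 1 ≤ k := Finset.card_pos.mpr ⟨Bn, hBn⟩
  -- any element ≤ k of a block equals its min
  have helper : ∀ C ∈ σ.blocks, ∀ i : ℕ, C.min = (i : WithTop ℕ) →
      ∀ t ∈ C, t ≤ k → t = i := by
    intro C hC i hCi t ht htk
    have ht1 : 1 ≤ t := (mem_block_le σ hC ht).1
    obtain ⟨Bt, hBt, hBtm⟩ := (hmin t).mp (by simp [ht1, htk])
    rcases eq_or_ne Bt C with rfl | hne
    · rw [hCi] at hBtm
      have : i = t := by simpa using hBtm
      omega
    · exact absurd ht (Finset.disjoint_left.mp (σ.disj Bt hBt C hC hne) (min_coe_mem hBtm)).elim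
  rcases hcard with hkn | hkn
  · -- k = n : all singletons, a = n
    refine ⟨n, hn, le_rfl, ?_⟩
    have hsing : ∀ C ∈ σ.blocks, ∃ i, 1 ≤ i ∧ i ≤ n ∧ C = {i} := by
      intro C hC
      obtain ⟨i, hi1, hi2, hCi⟩ := rhs_surj σ hmin C hC
      refine ⟨i, hi1, by omega, ?_⟩
      apply Finset.Subset.antisymm
      · intro t ht
        have := helper C hC i hCi t ht (by have := (mem_block_le σ hC ht).2; omega)
        simpa using this
      · simpa using min_coe_mem hCi
    ext B
    rw [mem_blocksOf]
    constructor
    · intro hB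
      obtain ⟨i, hi1, hi2, rfl⟩ := hsing B hB
      rcases eq_or_ne i n with rfl | hin
      · right; simp
      · exact Or.inl ⟨i, ⟨hin, hin, hi1, hi2⟩, rfl⟩
    · rintro (⟨i, ⟨hia, hin, hi1, hi2⟩, rfl⟩ | rfl)
      · obtain ⟨C, hC, hCm⟩ := (hmin i).mp (by simp; omega)
        obtain ⟨j, _, _, rfl⟩ := hsing C hC
        have : j = i := by rw [Finset.min_singleton] at hCm; simpa using hCm
        subst this; exact hC
      · obtain ⟨C, hC, hCm⟩ := (hmin n).mp (by simp; omega)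
        obtain ⟨j, _, _, rfl⟩ := hsing C hC
        have : j = n := by rw [Finset.min_singleton] at hCm; simpa using hCm
        subst this
        have : insert j ({j} : Finset ℕ) = {j} := by simp
        rwa [this]
  · -- k = n - 1
    have hn2 : 2 ≤ n := by omega
    obtain ⟨a, ha1, ha2, hBnm⟩ := rhs_surj σ hmin Bn hBn
    have haBn : a ∈ Bn := min_coe_mem hBnm
    have han : a < n := by omega
    refine ⟨a, ha1, by omega, ?_⟩
    -- Bn = insert a {n}
    have hBneq : Bn = insert a {n} := by
      apply Finset.Subset.antisymm
      · intro t ht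
        rcases eq_or_ne t n with rfl | htn
        · simp
        · have htk : t ≤ k := by have := (mem_block_le σ hBn ht).2; omega
          have := helper Bn hBn a hBnm t ht htk
          simp [this]
      · intro t ht
        simp at ht
        rcases ht with rfl | rfl <;> assumption
    -- other blocks are singletons
    have hsing : ∀ C ∈ σ.blocks, C ≠ Bn → ∃ i, 1 ≤ i ∧ i ≤ n - 1 ∧ i ≠ a ∧ C = {i} := by
      intro C hC hne
      obtain ⟨i, hi1, hi2, hCm⟩ := rhs_surj σ hmin C hC
      have hiC : i ∈ C := min_coe_mem hCm
      have hia : i ≠ a := by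
        rintro rfl
        exact (Finset.disjoint_left.mp (σ.disj C hC Bn hBn hne) hiC) haBn
      refine ⟨i, hi1, by omega, hia, ?_⟩
      apply Finset.Subset.antisymm
      · intro t ht
        have htn : t ≠ n := by
          rintro rfl
          exact (Finset.disjoint_left.mp (σ.disj C hC Bn hBn hne) ht) hnBn
        have htk : t ≤ k := by have := (mem_block_le σ hC ht).2; omega
        have := helper C hC i hCm t ht htk
        simpa using this
      · simpa using hiC
    ext B
    rw [mem_blocksOf]
    constructor
    · intro hB
      rcases eq_or_ne B Bn with rfl | hne
      · right; exact hBneq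
      · obtain ⟨i, hi1, hi2, hia, rfl⟩ := hsing B hB hne
        exact Or.inl ⟨i, ⟨hia, by omega, hi1, by omega⟩, rfl⟩
    · rintro (⟨i, ⟨hia, hin, hi1, hi2⟩, rfl⟩ | rfl)
      · obtain ⟨C, hC, hCm⟩ := (hmin i).mp (by simp; omega)
        have hne : C ≠ Bn := by
          rintro rfl
          rw [hBnm] at hCm
          exact hia (by simpa using hCm.symm)
        obtain ⟨j, _, _, _, rfl⟩ := hsing C hC hne
        have : j = i := by rw [Finset.min_singleton] at hCm; simpa using hCm
        subst this; exact hC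
      · rwa [← hBneq]

def mkP {n : ℕ} (a : ℕ) (ha1 : 1 ≤ a) (ha2 : a ≤ n) : SetPartition n where
  blocks := blocksOf n a
  nonempty_mem := by
    intro B hB
    rw [mem_blocksOf] at hB
    rcases hB with ⟨i, -, rfl⟩ | rfl
    · exact ⟨i, by simp⟩
    · exact ⟨a, by simp⟩
  disj := by
    intro B hB C hC hne
    rw [mem_blocksOf] at hB hC
    rw [Finset.disjoint_left]
    rcases hB with ⟨i, ⟨hia, hin, -, -⟩, rfl⟩ | rfl <;>
      rcases hC with ⟨j, ⟨hja, hjn, -, -⟩, rfl⟩ | rfl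
    · have hij : i ≠ j := by rintro rfl; exact hne rfl
      intro t ht; simp at ht ⊢; omega
    · intro t ht; simp at ht ⊢; omega
    · intro t ht; simp at ht ⊢; rcases ht with rfl | rfl <;> omega
    · exact absurd rfl hne
  cover := by
    ext x
    rw [Finset.mem_sup]
    simp only [id, Finset.mem_Icc]
    constructor
    · rintro ⟨B, hB, hxB⟩
      rw [mem_blocksOf] at hB
      rcases hB with ⟨i, ⟨-, -, h1, h2⟩, rfl⟩ | rfl
      · simp at hxB; omega
      · simp at hxB; rcases hxB with rfl | rfl <;> omega
    · rintro ⟨h1, h2⟩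
      by_cases hx : x = a ∨ x = n
      · exact ⟨insert a {n}, mem_blocksOf.mpr (Or.inr rfl), by rcases hx with rfl | rfl <;> simp⟩
      · push_neg at hx
        exact ⟨{x}, mem_blocksOf.mpr (Or.inl ⟨x, ⟨hx.1, hx.2, h1, h2⟩, rfl⟩), by simp⟩

lemma blocksOf_inj {n a b : ℕ} (h : blocksOf n a = blocksOf n b) : a = b := by
  have h1 : insert a {n} ∈ blocksOf n b := h ▸ mem_blocksOf.mpr (Or.inr rfl)
  rw [mem_blocksOf] at h1
  rcases h1 with ⟨i, ⟨hia, hin, -, -⟩, heq⟩ | heq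
  · have : n ∈ ({i} : Finset ℕ) := by rw [← heq]; simp
    simp at this
    exact absurd this.symm hin
  · have ha' : a ∈ insert b ({n} : Finset ℕ) := by rw [← heq]; simp
    have hb' : b ∈ insert a ({n} : Finset ℕ) := by rw [heq]; simp
    simp at ha' hb'
    omega

theorem stmt5 (n : ℕ) (hn : 1 ≤ n) :
    (∀ σ : SetPartition n,
      (σ.Avoids pat12_3 ∧ σ.Avoids pat123) ↔
        ((σ.blocks.card = n ∨ σ.blocks.card = n - 1) ∧
          ∀ i : ℕ, i ∈ Finset.Icc 1 σ.blocks.card ↔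
            ∃ B ∈ σ.blocks, B.min = (i : WithTop ℕ))) ∧
    ({σ : SetPartition n | σ.Avoids pat12_3 ∧ σ.Avoids pat123}).ncard = n := by
  classical
  constructor
  · intro σ
    rw [avoids_iff_good]
    constructor
    · intro hg
      obtain ⟨a, ha1, ha2, hab⟩ := good_classify hn σ hg
      have hcard := card_blocksOf ha1 ha2
      constructor
      · rw [hab, hcard]
        split
        · exact Or.inl rfl
        · exact Or.inr rfl
      · intro i
        rw [hab, hcard, mins_blocksOf ha1 ha2 i, Finset.mem_Icc]
    · rintro ⟨hcard, hmin⟩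
      obtain ⟨a, ha1, ha2, hab⟩ := rhs_classify hn σ hcard hmin
      exact good_blocksOf ha1 ha2 σ hab
  · have hset : {σ : SetPartition n | σ.Avoids pat12_3 ∧ σ.Avoids pat123} =
        ↑((Finset.Icc 1 n).attach.image
          (fun x => mkP x.1 (Finset.mem_Icc.mp x.2).1 (Finset.mem_Icc.mp x.2).2)) := by
      ext σ
      simp only [Set.mem_setOf_eq, Finset.coe_image, Set.mem_image, Finset.mem_coe,
        Finset.mem_attach, avoids_iff_good]
      constructor
      · intro hg
        obtain ⟨a, ha1, ha2, hab⟩ := good_classify hn σ hg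
        refine ⟨⟨a, Finset.mem_Icc.mpr ⟨ha1, ha2⟩⟩, trivial, ?_⟩
        exact (SetPartition.ext' (by rw [hab]; rfl)).symm
      · rintro ⟨⟨a, ha⟩, -, rfl⟩
        obtain ⟨ha1, ha2⟩ := Finset.mem_Icc.mp ha
        exact good_blocksOf ha1 ha2 _ rfl
    rw [hset, Set.ncard_coe_finset]
    rw [Finset.card_image_of_injOn]
    · rw [Finset.card_attach, Nat.card_Icc]; omega
    · intro x _ y _ hxy
      have : blocksOf n x.1 = blocksOf n y.1 := congrArg SetPartition.blocks hxy
      exact Subtype.ext (blocksOf_inj this)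
end

section
/- There is a bijection between the set of layered matchings of [n] (partitions of [n] avoiding 13/2 and 123) and the set of permutations of [n] avoiding the patterns 123, 132, and 213, given by mapping σ = B₁/B₂/.../B_k to the permutation obtained by listing the blocks in reverse order B_k B_{k−1} ... B₁ with elements of each block in increasing order. -/
open Finset

/-- A partition is layered when every block is an interval. -/
def SetPartition.Layered {n : ℕ} (σ : SetPartition n) : Prop :=
  ∀ B ∈ σ.blocks, ∃ a b : ℕ, B = Finset.Icc a b

/-- Two lists of the same length are order isomorphic. -/
def OrderIsoList (s p : List ℕ) : Prop :=
  ∃ h : s.length = p.length,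
    ∀ i j : Fin s.length,
      (s.get i < s.get j ↔ p.get (Fin.cast h i) < p.get (Fin.cast h j))

/-- The word `w` avoids the pattern `p`: no subsequence of `w` is
order isomorphic to `p`. -/
def AvoidsWord (w p : List ℕ) : Prop :=
  ¬ ∃ s : List ℕ, s.Sublist w ∧ OrderIsoList s p

open scoped List

/-!
Both sides are in bijection with the compositions of `n` into parts `1` and `2`, listed from
the top: a layered matching is determined by the sizes of its blocks, and its word `B_k ⋯ B₁`
is the run `n` or `n - 1, n` of the top block followed by the word of the remaining matching
of `{1, …, n - 1}` or `{1, …, n - 2}`. Position in that word is decided by the minima of the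
blocks, which gives the description of `Φ`.

The patterns `123`, `132`, `213` are exactly the patterns of length three whose first entry is
smaller than the last, so a permutation avoids all of them iff each entry exceeds every entry
at least two places later (`FarDecreasing`). Such a permutation of `{1, …, n}` starts with `n`
or with `n - 1, n`, and peeling off that run recovers the composition.
-/

namespace List

variable {α : Type*}

theorem pair_sublist_iff_exists_get {x y : α} {w : List α} :
    [x, y] <+ w ↔ ∃ i j : Fin w.length, i < j ∧ w.get i = x ∧ w.get j = y := by
  constructor
  · intro h
    obtain ⟨is, his, hp⟩ := sublist_eq_map_getElem h
    rcases is with _ | ⟨i, _ | ⟨j, _ | ⟨k, is⟩⟩⟩ <;> simp at his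
    exact ⟨i, j, by simpa using hp, by simp [his]⟩
  · rintro ⟨i, j, hij, rfl, rfl⟩
    simpa using map_getElem_sublist (is := [i, j]) (by simpa using hij)

theorem pair_sublist_append_iff {x y : α} {l₁ l₂ : List α} :
    [x, y] <+ l₁ ++ l₂ ↔ [x, y] <+ l₁ ∨ (x ∈ l₁ ∧ y ∈ l₂) ∨ [x, y] <+ l₂ := by
  induction l₁ with
  | nil => simp
  | cons a t ih =>
    simp only [cons_append, sublist_cons_iff, ih, cons.injEq, ↓existsAndEq, and_true,
      singleton_sublist, mem_append, mem_cons]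
    tauto

theorem mem_tail_of_pair_sublist {x y : α} {l : List α} (h : [x, y] <+ l) :
    y ∈ l.tail := by
  cases l with
  | nil => simp at h
  | cons a t =>
    rcases sublist_cons_iff.1 h with h | ⟨r, hr, h⟩
    · exact h.subset (by simp)
    · obtain ⟨-, rfl⟩ := hr
      simpa using h

theorem Pairwise.pair_sublist_iff [LinearOrder α] {x y : α} {l : List α}
    (hl : l.Pairwise (· < ·)) (hx : x ∈ l) (hy : y ∈ l) : [x, y] <+ l ↔ x < y := by
  refine ⟨fun h => by simpa using hl.sublist h, fun hxy => ?_⟩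
  induction l with
  | nil => simp at hx
  | cons a t ih =>
    rw [pairwise_cons] at hl
    rw [sublist_cons_iff]
    rcases mem_cons.1 hx with rfl | hxt
    · exact Or.inr ⟨[y], rfl, by simpa [hxy.ne'] using hy⟩
    · have hyt : y ∈ t := by
        rcases mem_cons.1 hy with rfl | hyt
        · exact absurd (hl.1 x hxt) (not_lt.2 hxy.le)
        · exact hyt
      exact Or.inl (ih hl.2 hxt hyt)

end List

theorem Finset.sup_id_erase {α : Type*} [DecidableEq α] {P : Finset (Finset α)} {B : Finset α}
    (hdisj : ∀ C ∈ P, C ≠ B → Disjoint C B) :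
    (P.erase B).sup id = P.sup id \ B := by
  ext z
  simp only [mem_sdiff, mem_sup, mem_erase, id]
  constructor
  · rintro ⟨C, ⟨hCB, hC⟩, hz⟩
    exact ⟨⟨C, hC, hz⟩, disjoint_left.1 (hdisj C hC hCB) hz⟩
  · rintro ⟨⟨C, hC, hz⟩, hzB⟩
    exact ⟨C, ⟨fun h => hzB (h ▸ hz), hC⟩, hz⟩

theorem Finset.min_lt_min_of_mem {α : Type*} [LinearOrder α] {D E : Finset α} {x : α}
    (hx : x ∈ D) (h : ∀ z ∈ E, x < z) : D.min < E.min := by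
  refine (min_le hx).trans_lt ?_
  rcases E.eq_empty_or_nonempty with rfl | hE
  · exact WithTop.coe_lt_top x
  · rw [← coe_min' hE]
    exact WithTop.coe_lt_coe.2 ((lt_min'_iff E hE).2 h)

def FarDecreasing {α : Type*} [LT α] : List α → Prop
  | [] => True
  | a :: t => (∀ z ∈ t.tail, z < a) ∧ FarDecreasing t

theorem FarDecreasing.lt_of_sublist {α : Type*} [LT α] {a b c : α} {w : List α}
    (hw : FarDecreasing w) (h : [a, b, c] <+ w) : c < a := by
  induction w with
  | nil => simp at h
  | cons d t ih =>
    rcases List.sublist_cons_iff.1 h with h | ⟨r, hr, h⟩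
    · exact ih hw.2 h
    · simp only [List.cons.injEq] at hr
      obtain ⟨rfl, rfl⟩ := hr
      exact hw.1 c (List.mem_tail_of_pair_sublist h)

theorem FarDecreasing.of_append_right {α : Type*} [LT α] {l₁ l₂ : List α}
    (h : FarDecreasing (l₁ ++ l₂)) : FarDecreasing l₂ := by
  induction l₁ with
  | nil => exact h
  | cons a t ih => exact ih h.2

theorem AvoidsWord.of_sublist {w s p : List ℕ} (h : AvoidsWord w p) (hs : s <+ w) :
    AvoidsWord s p :=
  fun ⟨u, hu, hiso⟩ => h ⟨u, hu.trans hs, hiso⟩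

theorem OrderIsoList.lt_of_lt {a b c d e f : ℕ} (h : OrderIsoList [a, b, c] [d, e, f])
    (hdf : d < f) : a < c :=
  (h.2 ⟨0, by simp⟩ ⟨2, by simp⟩).2 hdf

theorem orderIsoList_123 {a b c : ℕ} (hab : a < b) (hbc : b < c) :
    OrderIsoList [a, b, c] [1, 2, 3] :=
  ⟨rfl, fun i j => by fin_cases i <;> fin_cases j <;> simp <;> omega⟩

theorem orderIsoList_132 {a b c : ℕ} (hac : a < c) (hcb : c < b) :
    OrderIsoList [a, b, c] [1, 3, 2] :=
  ⟨rfl, fun i j => by fin_cases i <;> fin_cases j <;> simp <;> omega⟩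

theorem orderIsoList_213 {a b c : ℕ} (hba : b < a) (hac : a < c) :
    OrderIsoList [a, b, c] [2, 1, 3] :=
  ⟨rfl, fun i j => by fin_cases i <;> fin_cases j <;> simp <;> omega⟩

theorem FarDecreasing.avoidsWord {w : List ℕ} (hw : FarDecreasing w) {d e f : ℕ} (hdf : d < f) :
    AvoidsWord w [d, e, f] := by
  rintro ⟨s, hs, hiso⟩
  obtain ⟨a, b, c, rfl⟩ := List.length_eq_three.1 hiso.1
  exact (hw.lt_of_sublist hs).not_gt (hiso.lt_of_lt hdf)

theorem farDecreasing_of_avoidsWord {w : List ℕ} (hw : w.Nodup) (h₁ : AvoidsWord w [1, 2, 3])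
    (h₂ : AvoidsWord w [1, 3, 2]) (h₃ : AvoidsWord w [2, 1, 3]) : FarDecreasing w := by
  induction w with
  | nil => trivial
  | cons a t ih =>
    have ht : t <+ a :: t := List.sublist_cons_self a t
    refine ⟨fun z hz => ?_,
      ih hw.of_cons (h₁.of_sublist ht) (h₂.of_sublist ht) (h₃.of_sublist ht)⟩
    obtain ⟨b, t, rfl⟩ := List.exists_cons_of_ne_nil (List.ne_nil_of_mem (List.mem_of_mem_tail hz))
    have hs : [a, b, z] <+ a :: b :: t := by simpa using hz
    have hdist : (a ≠ b ∧ a ≠ z) ∧ b ≠ z := by simpa using hw.sublist hs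
    by_contra hza
    rcases lt_or_gt_of_ne hdist.1.1 with hab | hba
    · rcases lt_or_gt_of_ne hdist.2 with hbz | hzb
      · exact h₁ ⟨_, hs, orderIsoList_123 hab hbz⟩
      · exact h₂ ⟨_, hs, orderIsoList_132 (by omega) hzb⟩
    · exact h₃ ⟨_, hs, orderIsoList_213 hba (by omega)⟩

/-- The layered partition whose block sizes, read from the top block down, are the entries
of `c`. -/
def layerBlocks : List ℕ → Finset (Finset ℕ)
  | [] => ∅
  | p :: t => insert (Icc (t.sum + 1) (t.sum + p)) (layerBlocks t)

theorem mem_Icc_of_mem_layerBlocks {c : List ℕ} {B : Finset ℕ} {z : ℕ} (hB : B ∈ layerBlocks c)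
    (hz : z ∈ B) : 1 ≤ z ∧ z ≤ c.sum := by
  induction c with
  | nil => simp [layerBlocks] at hB
  | cons p t ih =>
    rcases mem_insert.1 hB with rfl | hB
    · rw [mem_Icc] at hz; rw [List.sum_cons]; omega
    · have := ih hB; rw [List.sum_cons]; omega

theorem sup_layerBlocks (c : List ℕ) : (layerBlocks c).sup id = Icc 1 c.sum := by
  induction c with
  | nil => rfl
  | cons p t ih =>
    ext z
    simp only [layerBlocks, sup_insert, id, ih, sup_eq_union, mem_union, mem_Icc, List.sum_cons]
    omega

theorem nonempty_of_mem_layerBlocks {c : List ℕ} (hc : ∀ p ∈ c, 0 < p) {B : Finset ℕ}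
    (hB : B ∈ layerBlocks c) : B.Nonempty := by
  induction c with
  | nil => simp [layerBlocks] at hB
  | cons p t ih =>
    rcases mem_insert.1 hB with rfl | hB
    · exact nonempty_Icc.2 (by have := hc p List.mem_cons_self; omega)
    · exact ih (fun q hq => hc q (List.mem_cons_of_mem p hq)) hB

theorem disjoint_of_mem_layerBlocks {c : List ℕ} {B C : Finset ℕ} (hB : B ∈ layerBlocks c)
    (hC : C ∈ layerBlocks c) (hBC : B ≠ C) : Disjoint B C := by
  induction c with
  | nil => simp [layerBlocks] at hB
  | cons p t ih =>
    have key : ∀ D ∈ layerBlocks t, Disjoint (Icc (t.sum + 1) (t.sum + p)) D :=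
      fun D hD => disjoint_left.2 fun z hzT hzD => by
        have := mem_Icc_of_mem_layerBlocks hD hzD; rw [mem_Icc] at hzT; omega
    rcases mem_insert.1 hB with rfl | hB <;> rcases mem_insert.1 hC with rfl | hC
    · exact absurd rfl hBC
    · exact key C hC
    · exact (key B hB).symm
    · exact ih hB hC

theorem exists_Icc_of_mem_layerBlocks {c : List ℕ} {B : Finset ℕ} (hB : B ∈ layerBlocks c) :
    ∃ a b, B = Icc a b := by
  induction c with
  | nil => simp [layerBlocks] at hB
  | cons p t ih =>
    rcases mem_insert.1 hB with rfl | hB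
    · exact ⟨_, _, rfl⟩
    · exact ih hB

theorem image_card_layerBlocks (c : List ℕ) : (layerBlocks c).image card = c.toFinset := by
  induction c with
  | nil => rfl
  | cons p t ih => simp [layerBlocks, image_insert, ih]

theorem eq_Icc_of_sum_mem_layerBlocks {p : ℕ} {t : List ℕ} (hp : 0 < p) {B : Finset ℕ}
    (hB : B ∈ layerBlocks (p :: t)) (hn : t.sum + p ∈ B) : B = Icc (t.sum + 1) (t.sum + p) := by
  rcases mem_insert.1 hB with rfl | hB
  · rfl
  · have := mem_Icc_of_mem_layerBlocks hB hn; omega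

theorem layerBlocks_injective {c₁ c₂ : List ℕ} (h₁ : ∀ p ∈ c₁, 0 < p) (h₂ : ∀ p ∈ c₂, 0 < p)
    (h : layerBlocks c₁ = layerBlocks c₂) : c₁ = c₂ := by
  have hsum : c₁.sum = c₂.sum := by
    simpa [sup_layerBlocks] using congrArg (fun P => (P.sup id).card) h
  induction c₁ generalizing c₂ with
  | nil =>
    rcases c₂ with _ | ⟨q, t'⟩
    · rfl
    · have := h₂ q List.mem_cons_self; simp only [List.sum_nil, List.sum_cons] at hsum; omega
  | cons p t ih =>
    rcases c₂ with _ | ⟨q, t'⟩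
    · have := h₁ p List.mem_cons_self; simp only [List.sum_nil, List.sum_cons] at hsum; omega
    have hp := h₁ p List.mem_cons_self
    have hq := h₂ q List.mem_cons_self
    simp only [List.sum_cons] at hsum
    have htop : Icc (t.sum + 1) (t.sum + p) = Icc (t'.sum + 1) (t'.sum + q) := by
      refine eq_Icc_of_sum_mem_layerBlocks hq (h ▸ mem_insert_self _ _) ?_
      rw [mem_Icc]; omega
    obtain rfl : p = q := by simpa using congrArg card htop
    have htail : t.sum = t'.sum := by omega
    have hn : t.sum + p ∈ Icc (t.sum + 1) (t.sum + p) := mem_Icc.2 ⟨by omega, le_rfl⟩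
    have hnot : ∀ s : List ℕ, s.sum = t.sum → Icc (t.sum + 1) (t.sum + p) ∉ layerBlocks s :=
      fun s hs hmem => by have := mem_Icc_of_mem_layerBlocks hmem hn; omega
    have hrest : layerBlocks t = layerBlocks t' := by
      rw [← erase_insert (hnot t rfl), ← erase_insert (hnot t' htail.symm)]
      simpa [layerBlocks, htail] using congrArg (·.erase (Icc (t.sum + 1) (t.sum + p))) h
    rw [ih (fun q hq => h₁ q (List.mem_cons_of_mem p hq))
      (fun q hq => h₂ q (List.mem_cons_of_mem p hq)) hrest htail]

theorem exists_layerBlocks_eq {n : ℕ} {P : Finset (Finset ℕ)} (hne : ∀ B ∈ P, B.Nonempty)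
    (hdisj : ∀ B ∈ P, ∀ C ∈ P, B ≠ C → Disjoint B C) (hcover : P.sup id = Icc 1 n)
    (hlayer : ∀ B ∈ P, ∃ a b, B = Icc a b) :
    ∃ c : List ℕ, (∀ p ∈ c, 0 < p) ∧ c.sum = n ∧ layerBlocks c = P := by
  induction n using Nat.strong_induction_on generalizing P with
  | _ n ih =>
  rcases Nat.eq_zero_or_pos n with rfl | hn
  · refine ⟨[], by simp, rfl, (eq_empty_of_forall_notMem fun B hB => ?_).symm⟩
    obtain ⟨z, hz⟩ := hne B hB
    have := hcover ▸ le_sup (f := id) hB hz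
    simp at this
  obtain ⟨B, hB, hnB⟩ := mem_sup.1 (hcover ▸ mem_Icc.2 ⟨hn, le_rfl⟩ : n ∈ P.sup id)
  obtain ⟨a, b, rfl⟩ := hlayer B hB
  have hsub : Icc a b ⊆ Icc 1 n := hcover ▸ le_sup (f := id) hB
  have hab := mem_Icc.1 hnB
  have ha := mem_Icc.1 (hsub (mem_Icc.2 ⟨le_rfl, hab.2.trans' hab.1⟩))
  have hb := mem_Icc.1 (hsub (mem_Icc.2 ⟨hab.1.trans hab.2, le_rfl⟩))
  have hcover' : (P.erase (Icc a b)).sup id = Icc 1 (a - 1) := by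
    rw [sup_id_erase fun C hC hCB => hdisj C hC _ hB hCB, hcover]
    ext z; simp only [mem_sdiff, mem_Icc]; omega
  obtain ⟨c, hc, hsum, hblocks⟩ := ih (a - 1) (by omega)
    (fun C hC => hne C (mem_of_mem_erase hC))
    (fun C hC D hD => hdisj C (mem_of_mem_erase hC) D (mem_of_mem_erase hD)) hcover'
    (fun C hC => hlayer C (mem_of_mem_erase hC))
  refine ⟨(n + 1 - a) :: c, List.forall_mem_cons.2 ⟨by omega, hc⟩, by simp; omega, ?_⟩
  rw [layerBlocks, hblocks, hsum, show a - 1 + 1 = a by omega,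
    show a - 1 + (n + 1 - a) = b by omega, insert_erase hB]

/-- The word `B_k ⋯ B₁` of the partition `layerBlocks c`. -/
def layerWord : List ℕ → List ℕ
  | [] => []
  | p :: t => List.range' (t.sum + 1) p ++ layerWord t

theorem mem_layerWord {c : List ℕ} {z : ℕ} : z ∈ layerWord c ↔ 1 ≤ z ∧ z ≤ c.sum := by
  induction c with
  | nil => simp only [layerWord, List.not_mem_nil, false_iff, List.sum_nil]; omega
  | cons p t ih =>
    simp only [layerWord, List.mem_append, List.mem_range'_1, ih, List.sum_cons]
    omega

theorem length_layerWord (c : List ℕ) : (layerWord c).length = c.sum := by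
  induction c with
  | nil => rfl
  | cons p t ih => simp [layerWord, ih]

theorem nodup_layerWord (c : List ℕ) : (layerWord c).Nodup := by
  induction c with
  | nil => exact List.nodup_nil
  | cons p t ih =>
    refine List.Nodup.append (List.nodup_range' ..) ih fun x hx hy => ?_
    rw [List.mem_range'_1] at hx
    have := mem_layerWord.1 hy
    omega

theorem farDecreasing_layerWord {c : List ℕ} (hc : ∀ p ∈ c, p ≤ 2) :
    FarDecreasing (layerWord c) := by
  induction c with
  | nil => trivial
  | cons p t ih =>
    have hle : ∀ z ∈ layerWord t, z ≤ t.sum := fun z hz => (mem_layerWord.1 hz).2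
    have hfar := ih fun q hq => hc q (List.mem_cons_of_mem p hq)
    have hp : p ≤ 2 := hc p List.mem_cons_self
    interval_cases p
    · simpa [layerWord] using hfar
    · simp only [layerWord, List.range']
      exact ⟨fun z hz => Nat.lt_succ_of_le (hle z (List.mem_of_mem_tail hz)), hfar⟩
    · simp only [layerWord, List.range']
      exact ⟨fun z hz => by have := hle z hz; omega,
        fun z hz => by have := hle z (List.mem_of_mem_tail hz); omega, hfar⟩

theorem head?_layerWord_cons {p : ℕ} (hp : 0 < p) (t : List ℕ) :
    (layerWord (p :: t)).head? = some (t.sum + 1) := by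
  obtain ⟨q, rfl⟩ := Nat.exists_eq_succ_of_ne_zero hp.ne'
  rw [layerWord, List.range'_succ, List.cons_append, List.head?_cons]

theorem layerWord_injective {c₁ c₂ : List ℕ} (h₁ : ∀ p ∈ c₁, 0 < p) (h₂ : ∀ p ∈ c₂, 0 < p)
    (h : layerWord c₁ = layerWord c₂) : c₁ = c₂ := by
  have hsum : c₁.sum = c₂.sum := by simpa [length_layerWord] using congrArg List.length h
  induction c₁ generalizing c₂ with
  | nil =>
    rcases c₂ with _ | ⟨q, t'⟩
    · rfl
    · have := h₂ q List.mem_cons_self; simp only [List.sum_nil, List.sum_cons] at hsum; omega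
  | cons p t ih =>
    rcases c₂ with _ | ⟨q, t'⟩
    · have := h₁ p List.mem_cons_self; simp only [List.sum_nil, List.sum_cons] at hsum; omega
    have htail : t.sum = t'.sum := Nat.add_right_cancel <| Option.some.inj <| by
      rw [← head?_layerWord_cons (h₁ p List.mem_cons_self),
        ← head?_layerWord_cons (h₂ q List.mem_cons_self), h]
    obtain rfl : p = q := by simp only [List.sum_cons] at hsum; omega
    rw [layerWord, layerWord, htail, List.append_cancel_left_eq] at h
    rw [ih (fun q hq => h₁ q (List.mem_cons_of_mem p hq))
      (fun q hq => h₂ q (List.mem_cons_of_mem p hq)) h htail]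

theorem FarDecreasing.exists_eq_range'_append {n : ℕ} {w : List ℕ} (hfar : FarDecreasing w)
    (hmem : ∀ z, z ∈ w ↔ 1 ≤ z ∧ z ≤ n) (hn : 0 < n) :
    ∃ m p t, n = m + p ∧ 0 < p ∧ p ≤ 2 ∧ w = List.range' (m + 1) p ++ t := by
  rcases w with _ | ⟨a, t⟩
  · exact absurd ((hmem n).2 ⟨hn, le_rfl⟩) List.not_mem_nil
  have ha := (hmem a).1 List.mem_cons_self
  by_cases han : a = n
  · exact ⟨n - 1, 1, t, by omega, by omega, by omega, by rw [Nat.sub_add_cancel hn, han]; rfl⟩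
  have hnt : n ∈ t := (List.mem_cons.1 ((hmem n).2 ⟨hn, le_rfl⟩)).resolve_left (Ne.symm han)
  rcases t with _ | ⟨b, t⟩
  · simp at hnt
  have hb : b = n := by
    by_contra hbn
    have := hfar.1 n ((List.mem_cons.1 hnt).resolve_left (Ne.symm hbn))
    omega
  have ha' : a = n - 1 := by
    rcases List.mem_cons.1 ((hmem (n - 1)).2 (by omega)) with h | h
    · exact h.symm
    rcases List.mem_cons.1 h with h | h
    · omega
    · have := hfar.1 _ h; omega
  refine ⟨n - 2, 2, t, by omega, by omega, by omega, ?_⟩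
  rw [ha', hb, show n - 2 + 1 = n - 1 by omega, List.range'_succ, List.range'_one,
    show n - 1 + 1 = n by omega]
  rfl

theorem mem_iff_of_nodup_range'_append {m p : ℕ} {t : List ℕ}
    (hw : (List.range' (m + 1) p ++ t).Nodup)
    (hmem : ∀ z, z ∈ List.range' (m + 1) p ++ t ↔ 1 ≤ z ∧ z ≤ m + p) (z : ℕ) :
    z ∈ t ↔ 1 ≤ z ∧ z ≤ m := by
  have hdisj := List.disjoint_of_nodup_append hw
  have hz := hmem z
  rw [List.mem_append, List.mem_range'_1] at hz
  constructor
  · intro hzt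
    have hzr : ¬(m + 1 ≤ z ∧ z < m + 1 + p) := fun h => hdisj (List.mem_range'_1.2 h) hzt
    have := hz.1 (Or.inr hzt)
    omega
  · intro hzm
    exact (hz.2 (by omega)).resolve_left (by omega)

theorem exists_layerWord_eq {n : ℕ} {w : List ℕ} (hw : w.Nodup)
    (hmem : ∀ z, z ∈ w ↔ 1 ≤ z ∧ z ≤ n) (hfar : FarDecreasing w) :
    ∃ c : List ℕ, (∀ p ∈ c, 0 < p ∧ p ≤ 2) ∧ c.sum = n ∧ layerWord c = w := by
  induction n using Nat.strong_induction_on generalizing w with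
  | _ n ih =>
  rcases Nat.eq_zero_or_pos n with rfl | hn
  · refine ⟨[], by simp, rfl, ?_⟩
    exact (List.eq_nil_iff_forall_not_mem.2 fun z hz => by have := (hmem z).1 hz; omega).symm
  obtain ⟨m, p, t, rfl, hp₀, hp₂, rfl⟩ := hfar.exists_eq_range'_append hmem hn
  obtain ⟨c, hc, rfl, rfl⟩ := ih m (by omega) (List.Nodup.of_append_right hw)
    (mem_iff_of_nodup_range'_append hw hmem) hfar.of_append_right
  refine ⟨p :: c, ?_, by simp [add_comm], rfl⟩
  simpa [hp₀, hp₂] using hc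

theorem pair_sublist_layerWord_iff {c : List ℕ} {B C : Finset ℕ} {x y : ℕ}
    (hB : B ∈ layerBlocks c) (hC : C ∈ layerBlocks c) (hx : x ∈ B) (hy : y ∈ C) :
    [x, y] <+ layerWord c ↔ C.min < B.min ∨ (B = C ∧ x < y) := by
  induction c with
  | nil => simp [layerBlocks] at hB
  | cons p t ih =>
    have hR : ∀ {z}, z ∈ List.range' (t.sum + 1) p ↔ z ∈ Icc (t.sum + 1) (t.sum + p) := by
      simp only [List.mem_range'_1, mem_Icc]; omega
    have hW : ∀ {z}, z ∈ layerWord t ↔ 1 ≤ z ∧ z ≤ t.sum := mem_layerWord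
    have hrest : ∀ {D z}, D ∈ layerBlocks t → z ∈ D → 1 ≤ z ∧ z ≤ t.sum :=
      mem_Icc_of_mem_layerBlocks
    have hfst : ∀ {l : List ℕ}, [x, y] <+ l → x ∈ l := fun h => h.subset (by simp)
    have hsnd : ∀ {l : List ℕ}, [x, y] <+ l → y ∈ l := fun h => h.subset (by simp)
    rw [layerWord, List.pair_sublist_append_iff]
    rcases mem_insert.1 hB with rfl | hB <;> rcases mem_insert.1 hC with rfl | hC
    · have hxW : x ∉ layerWord t := fun h => by have := hW.1 h; rw [mem_Icc] at hx; omega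
      have hyW : y ∉ layerWord t := fun h => by have := hW.1 h; rw [mem_Icc] at hy; omega
      rw [(List.pairwise_lt_range' ..).pair_sublist_iff (hR.2 hx) (hR.2 hy), lt_self_iff_false]
      have hnW : ¬[x, y] <+ layerWord t := fun h => hxW (hfst h)
      tauto
    · refine iff_of_true (Or.inr (Or.inl ⟨hR.2 hx, hW.2 (hrest hC hy)⟩))
        (Or.inl (min_lt_min_of_mem hy fun z hz => ?_))
      have := hrest hC hy; rw [mem_Icc] at hz; omega
    · have hxR : x ∉ List.range' (t.sum + 1) p := fun h => by
        have := hrest hB hx; rw [hR, mem_Icc] at h; omega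
      have hyW : y ∉ layerWord t := fun h => by have := hW.1 h; rw [mem_Icc] at hy; omega
      refine iff_of_false (fun h => ?_) ?_
      · rcases h with h | ⟨h, -⟩ | h
        exacts [hxR (hfst h), hxR h, hyW (hsnd h)]
      rintro (hlt | ⟨rfl, -⟩)
      · exact hlt.not_gt (min_lt_min_of_mem hx fun z hz => by
          have := hrest hB hx; rw [mem_Icc] at hz; omega)
      · exact hxR (hR.2 hx)
    · have hxR : x ∉ List.range' (t.sum + 1) p := fun h => by
        have := hrest hB hx; rw [hR, mem_Icc] at h; omega
      have hnR : ¬[x, y] <+ List.range' (t.sum + 1) p := fun h => hxR (hfst h)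
      rw [← ih hB hC]
      tauto

attribute [ext] SetPartition

abbrev SmallComposition (n : ℕ) := {c : Composition n // ∀ p ∈ c.blocks, p ≤ 2}

abbrev LayeredMatching (n : ℕ) := {σ : SetPartition n // σ.Layered ∧ ∀ B ∈ σ.blocks, B.card ≤ 2}

abbrev AvoidingPermutation (n : ℕ) :=
  {w : List ℕ // w.Nodup ∧ w.toFinset = Finset.Icc 1 n ∧
    AvoidsWord w [1, 2, 3] ∧ AvoidsWord w [1, 3, 2] ∧ AvoidsWord w [2, 1, 3]}

namespace SmallComposition

variable {n : ℕ}

def toLayeredMatching (c : SmallComposition n) : LayeredMatching n :=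
  ⟨⟨layerBlocks c.1.blocks, fun _ => nonempty_of_mem_layerBlocks fun _ => c.1.blocks_pos,
      fun _ hB _ hC => disjoint_of_mem_layerBlocks hB hC,
      by rw [sup_layerBlocks, c.1.blocks_sum]⟩,
    fun _ => exists_Icc_of_mem_layerBlocks,
    fun B hB => c.2 _ (List.mem_toFinset.1 (image_card_layerBlocks _ ▸ mem_image_of_mem card hB))⟩

def toAvoidingPermutation (c : SmallComposition n) : AvoidingPermutation n :=
  have hfar := farDecreasing_layerWord c.2
  ⟨layerWord c.1.blocks, nodup_layerWord _,
    by ext z; rw [List.mem_toFinset, mem_layerWord, c.1.blocks_sum, mem_Icc],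
    hfar.avoidsWord (by norm_num), hfar.avoidsWord (by norm_num), hfar.avoidsWord (by norm_num)⟩

theorem toLayeredMatching_bijective : Function.Bijective (toLayeredMatching (n := n)) := by
  refine ⟨fun c₁ c₂ h => ?_, fun σ => ?_⟩
  · exact Subtype.ext <| Composition.ext <| layerBlocks_injective (fun _ => c₁.1.blocks_pos)
      (fun _ => c₂.1.blocks_pos) (congrArg (·.1.blocks) h)
  · obtain ⟨c, hc, hsum, hblocks⟩ :=
      exists_layerBlocks_eq σ.1.nonempty_mem σ.1.disj σ.1.cover σ.2.1
    refine ⟨⟨⟨c, hc _, hsum⟩, fun p hp => ?_⟩, Subtype.ext (SetPartition.ext hblocks)⟩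
    rw [← List.mem_toFinset, ← image_card_layerBlocks, hblocks, mem_image] at hp
    obtain ⟨B, hB, rfl⟩ := hp
    exact σ.2.2 B hB

theorem toAvoidingPermutation_bijective :
    Function.Bijective (toAvoidingPermutation (n := n)) := by
  refine ⟨fun c₁ c₂ h => ?_, fun w => ?_⟩
  · exact Subtype.ext <| Composition.ext <| layerWord_injective (fun _ => c₁.1.blocks_pos)
      (fun _ => c₂.1.blocks_pos) (congrArg Subtype.val h)
  · obtain ⟨hnodup, hset, h₁, h₂, h₃⟩ := w.2
    have hmem : ∀ z, z ∈ w.1 ↔ 1 ≤ z ∧ z ≤ n := fun z => by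
      rw [← List.mem_toFinset, hset, mem_Icc]
    obtain ⟨c, hc, hsum, hword⟩ :=
      exists_layerWord_eq hnodup hmem (farDecreasing_of_avoidsWord hnodup h₁ h₂ h₃)
    exact ⟨⟨⟨c, fun hp => (hc _ hp).1, hsum⟩, fun p hp => (hc p hp).2⟩, Subtype.ext hword⟩

end SmallComposition

theorem stmt7 (n : ℕ) :
    ∃ Φ : {σ : SetPartition n // σ.Layered ∧ ∀ B ∈ σ.blocks, B.card ≤ 2} →
        {w : List ℕ // w.Nodup ∧ w.toFinset = Finset.Icc 1 n ∧
          AvoidsWord w [1, 2, 3] ∧ AvoidsWord w [1, 3, 2] ∧ AvoidsWord w [2, 1, 3]},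
      Function.Bijective Φ ∧
      ∀ σ : {σ : SetPartition n // σ.Layered ∧ ∀ B ∈ σ.blocks, B.card ≤ 2},
        ∀ B ∈ σ.1.blocks, ∀ C ∈ σ.1.blocks, ∀ x ∈ B, ∀ y ∈ C,
          ((∃ i j : Fin (Φ σ).1.length, i < j ∧ (Φ σ).1.get i = x ∧ (Φ σ).1.get j = y)
            ↔ (C.min < B.min ∨ (B = C ∧ x < y))) := by
  let e := Equiv.ofBijective _ (SmallComposition.toLayeredMatching_bijective (n := n))
  refine ⟨SmallComposition.toAvoidingPermutation ∘ e.symm,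
    SmallComposition.toAvoidingPermutation_bijective.comp e.symm.bijective, ?_⟩
  intro σ B hB C hC x hx y hy
  obtain ⟨c, rfl⟩ := e.surjective σ
  rw [← List.pair_sublist_iff_exists_get, Function.comp_apply, e.symm_apply_apply]
  exact pair_sublist_layerWord_iff hB hC hx hy
end
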